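/- arXiv:1011.3242 — 8 statements merged into one kernel-verified Lean document; each statement's English description precedes it below -/
import Mathlib

section
/- Let Ω, Ω₁, …, Ωₙ be nonempty closed convex subsets of ℝˢ and suppose that at least one of the target sets Ωᵢ (say Ω₁) is bounded. Then the generalized Heron problem admits an optimal solution, i.e., there exists x̄ ∈ Ω such that D(x̄) ≤ D(x) for all x ∈ Ω, where D(x) = ∑_{i=1}^n d(x;Ωᵢ). -/
/-- The generalized Heron problem: minimize `D x = ∑ i, d(x; Ωᵢ)` over `x ∈ Ω`.
If all sets are nonempty closed convex and at least one of the target sets `Ωᵢ₀`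
is bounded, then an optimal solution exists. -/
theorem heron_exists_of_bounded_target {s n : ℕ}
    (Ω : Set (EuclideanSpace ℝ (Fin s))) (Ωs : Fin n → Set (EuclideanSpace ℝ (Fin s)))
    (hΩne : Ω.Nonempty) (hΩcl : IsClosed Ω) (hΩcv : Convex ℝ Ω)
    (hne : ∀ i, (Ωs i).Nonempty) (hcl : ∀ i, IsClosed (Ωs i)) (hcv : ∀ i, Convex ℝ (Ωs i))
    (i₀ : Fin n) (hbd : Bornology.IsBounded (Ωs i₀)) :
    ∃ xbar ∈ Ω, ∀ x ∈ Ω,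
      ∑ i, Metric.infDist xbar (Ωs i) ≤ ∑ i, Metric.infDist x (Ωs i) := by
  obtain ⟨c, hc⟩ := hne i₀
  obtain ⟨R, hR⟩ := hbd.subset_closedBall c
  set D : EuclideanSpace ℝ (Fin s) → ℝ := fun x => ∑ i, Metric.infDist x (Ωs i) with hD
  have hDcont : Continuous D := by
    apply continuous_finset_sum
    intro i _
    exact Metric.continuous_infDist_pt (Ωs i)
  have hDlb : ∀ x, dist x c - R ≤ D x := by
    intro x
    have h1 : dist x c - R ≤ Metric.infDist x (Ωs i₀) := by
      obtain ⟨y, hy, hxy⟩ := ((hcl i₀).exists_infDist_eq_dist (hne i₀) x)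
      have hyc : dist y c ≤ R := hR hy
      have := dist_triangle x y c
      linarith [hxy ▸ this]
    calc dist x c - R ≤ Metric.infDist x (Ωs i₀) := h1
      _ ≤ D x := Finset.single_le_sum (fun i _ => Metric.infDist_nonneg) (Finset.mem_univ i₀)
  obtain ⟨x₀, hx₀⟩ := hΩne
  set M := D x₀ with hM
  have hMnn : 0 ≤ M := Finset.sum_nonneg fun i _ => Metric.infDist_nonneg
  set K := Ω ∩ Metric.closedBall c (M + R) with hK
  have hKcpt : IsCompact K := (isCompact_closedBall c (M + R)).inter_left hΩcl
  have hx₀K : x₀ ∈ K := by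
    refine ⟨hx₀, ?_⟩
    simp only [Metric.mem_closedBall]
    have := hDlb x₀
    linarith
  obtain ⟨xbar, hxbarK, hmin⟩ := hKcpt.exists_isMinOn ⟨x₀, hx₀K⟩ hDcont.continuousOn
  refine ⟨xbar, hxbarK.1, fun x hx => ?_⟩
  by_cases hxK : x ∈ Metric.closedBall c (M + R)
  · exact hmin ⟨hx, hxK⟩
  · have : M + R < dist x c := by
      simpa [Metric.mem_closedBall] using hxK
    have h1 : D xbar ≤ M := hmin hx₀K
    have h2 := hDlb x
    linarith
end

section
/- Let Ω, Ω₁, …, Ωₙ be nonempty closed convex subsets of ℝˢ with Ωᵢ ∩ Ω = ∅ for all i = 1, …, n, and let x̄ ∈ Ω. For each i let aᵢ(x̄) = (x̄ − Π(x̄;Ωᵢ))/d(x̄;Ωᵢ). If x̄ is an optimal solution of the generalized Heron problem (i.e., D(x̄) ≤ D(x) for all x ∈ Ω with D(x) = ∑_{i=1}^n d(x;Ωᵢ)), then −∑_{i=1}^n aᵢ(x̄) ∈ N(x̄;Ω). -/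
/-!
Replacing each distance `d(x; Ωᵢ)` by the distance `‖x - pᵢ‖` to the fixed nearest point
`pᵢ = Π(x̄; Ωᵢ)` gives a majorant of `D` that touches it at `x̄`, so `x̄` also minimizes the
majorant over `Ω`. Since `x̄ ∉ Ωᵢ`, the majorant is differentiable at `x̄` with gradient
`∑ aᵢ(x̄)`, and the first-order condition at a minimizer over a convex set is exactly
`-∑ aᵢ(x̄) ∈ N(x̄; Ω)`.
-/

open Metric Finset

section

variable {E : Type*} [NormedAddCommGroup E] [InnerProductSpace ℝ E]

theorem hasFDerivAt_norm_sub {x p : E} (hx : x ≠ p) :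
    HasFDerivAt (fun y => ‖y - p‖) (innerSL ℝ (‖x - p‖⁻¹ • (x - p))) x := by
  have h := ((hasFDerivAt_id x).sub_const p).norm_sq.sqrt (by simpa [sub_eq_zero] using hx)
  simp only [id, Real.sqrt_sq (norm_nonneg _)] at h
  convert h using 1
  ext v
  simp only [map_smul, coe_innerSL_apply, smul_apply, ContinuousLinearMap.comp_id,
    smul_eq_mul, nsmul_eq_mul, Nat.cast_ofNat]
  field_simp

theorem IsMinOn.hasFDerivAt_sub_nonneg {f : E → ℝ} {f' : E →L[ℝ] ℝ} {s : Set E} {a y : E}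
    (h : IsMinOn f s a) (hf : HasFDerivAt f f' a) (hs : Convex ℝ s) (ha : a ∈ s) (hy : y ∈ s) :
    0 ≤ f' (y - a) :=
  h.localize.hasFDerivWithinAt_nonneg hf.hasFDerivWithinAt
    (sub_mem_posTangentConeAt_of_segment_subset (hs.segment_subset ha hy))

end

theorem heron_optimal_necessary_general {s n : ℕ}
    (Ω : Set (EuclideanSpace ℝ (Fin s))) (Ωs : Fin n → Set (EuclideanSpace ℝ (Fin s)))
    (hΩcv : Convex ℝ Ω)
    (hdisj : ∀ i, Ωs i ∩ Ω = ∅)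
    (xbar : EuclideanSpace ℝ (Fin s)) (hxbar : xbar ∈ Ω)
    (p : Fin n → EuclideanSpace ℝ (Fin s))
    (hp : ∀ i, p i ∈ Ωs i ∧ dist xbar (p i) = Metric.infDist xbar (Ωs i))
    (a : Fin n → EuclideanSpace ℝ (Fin s))
    (ha : ∀ i, a i = (Metric.infDist xbar (Ωs i))⁻¹ • (xbar - p i))
    (hopt : ∀ x ∈ Ω, ∑ i, Metric.infDist xbar (Ωs i) ≤ ∑ i, Metric.infDist x (Ωs i)) :
    ∀ x ∈ Ω, (inner ℝ (-(∑ i, a i)) (x - xbar) : ℝ) ≤ 0 := by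
  have hxp : ∀ i, xbar ≠ p i := fun i h => by
    have : p i ∈ Ωs i ∩ Ω := ⟨(hp i).1, h ▸ hxbar⟩
    simp [hdisj i] at this
  have hdist : ∀ i, infDist xbar (Ωs i) = ‖xbar - p i‖ := fun i => by
    rw [← (hp i).2, dist_eq_norm]
  let G := fun y => ∑ i, ‖y - p i‖
  have hG : HasFDerivAt G (innerSL ℝ (∑ i, a i)) xbar := by
    rw [map_sum]
    refine HasFDerivAt.fun_sum fun i _ => ?_
    rw [ha i, hdist i]
    exact hasFDerivAt_norm_sub (hxp i)
  have hmin : IsMinOn G Ω xbar := fun x hx => calc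
    G xbar = ∑ i, infDist xbar (Ωs i) := by simp only [G, hdist]
    _ ≤ ∑ i, infDist x (Ωs i) := hopt x hx
    _ ≤ G x := sum_le_sum fun i _ => by
      rw [← dist_eq_norm]
      exact infDist_le_dist_of_mem (hp i).1
  intro x hx
  rw [inner_neg_left, neg_nonpos]
  exact hmin.hasFDerivAt_sub_nonneg hG hΩcv hxbar hx

/-- Necessity in Theorem 3.2: if `xbar` solves the generalized Heron problem and
`Ωᵢ ∩ Ω = ∅` for all `i`, then `-∑ i, aᵢ(xbar) ∈ N(xbar; Ω)`, where
`aᵢ(xbar) = (xbar - Π(xbar; Ωᵢ)) / d(xbar; Ωᵢ)`. -/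
theorem heron_optimal_necessary {s n : ℕ}
    (Ω : Set (EuclideanSpace ℝ (Fin s))) (Ωs : Fin n → Set (EuclideanSpace ℝ (Fin s)))
    (hΩne : Ω.Nonempty) (hΩcl : IsClosed Ω) (hΩcv : Convex ℝ Ω)
    (hne : ∀ i, (Ωs i).Nonempty) (hcl : ∀ i, IsClosed (Ωs i)) (hcv : ∀ i, Convex ℝ (Ωs i))
    (hdisj : ∀ i, Ωs i ∩ Ω = ∅)
    (xbar : EuclideanSpace ℝ (Fin s)) (hxbar : xbar ∈ Ω)
    (p : Fin n → EuclideanSpace ℝ (Fin s))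
    (hp : ∀ i, p i ∈ Ωs i ∧ dist xbar (p i) = Metric.infDist xbar (Ωs i))
    (a : Fin n → EuclideanSpace ℝ (Fin s))
    (ha : ∀ i, a i = (Metric.infDist xbar (Ωs i))⁻¹ • (xbar - p i))
    (hopt : ∀ x ∈ Ω, ∑ i, Metric.infDist xbar (Ωs i) ≤ ∑ i, Metric.infDist x (Ωs i)) :
    ∀ x ∈ Ω, (inner ℝ (-(∑ i, a i)) (x - xbar) : ℝ) ≤ 0 :=
  heron_optimal_necessary_general Ω Ωs hΩcv hdisj xbar hxbar p hp a ha hopt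
end

section
/- Let Ω, Ω₁, …, Ωₙ be nonempty closed convex subsets of ℝˢ with Ωᵢ ∩ Ω = ∅ for all i = 1, …, n, and let x̄ ∈ Ω. For each i let aᵢ(x̄) = (x̄ − Π(x̄;Ωᵢ))/d(x̄;Ωᵢ). If −∑_{i=1}^n aᵢ(x̄) ∈ N(x̄;Ω), then x̄ is an optimal solution of the generalized Heron problem, i.e., D(x̄) ≤ D(x) for all x ∈ Ω where D(x) = ∑_{i=1}^n d(x;Ωᵢ). -/
/-!
The unit vector `a = (x̄ - p) / d(x̄; C)` pointing from the projection `p` of `x̄` onto a convex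
set `C` is a subgradient of `d(·; C)` at `x̄`: for `q ∈ C`,
`d(x̄; C) + ⟪a, x - x̄⟫ = ⟪a, x - p⟫ = ⟪a, x - q⟫ + ⟪a, q - p⟫ ≤ ‖x - q‖`, the last term being
nonpositive by the obtuse angle property of the projection. Summing these inequalities over the
sets `Ωᵢ`, the normal cone condition makes the linear terms nonnegative on `Ω`.
-/

open Metric

section Subgradient

variable {E : Type*} [NormedAddCommGroup E] [InnerProductSpace ℝ E] {C : Set E} {x₀ p : E}

theorem Convex.real_inner_sub_le_zero_of_dist_eq_infDist (hC : Convex ℝ C) (hp : p ∈ C)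
    (hd : dist x₀ p = infDist x₀ C) : ∀ q ∈ C, inner ℝ (x₀ - p) (q - p) ≤ 0 := by
  refine (norm_eq_iInf_iff_real_inner_le_zero hC hp).1 ?_
  simpa only [dist_eq_norm, infDist_eq_iInf] using hd

/-- Where `x₀ ∈ C` the vector is `0⁻¹ • 0 = 0` and the inequality reads `0 ≤ d(x; C)`. -/
theorem Convex.infDist_add_real_inner_le_infDist (hC : Convex ℝ C) (hp : p ∈ C)
    (hd : dist x₀ p = infDist x₀ C) (x : E) :
    infDist x₀ C + inner ℝ ((infDist x₀ C)⁻¹ • (x₀ - p)) (x - x₀) ≤ infDist x C := by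
  set a := (infDist x₀ C)⁻¹ • (x₀ - p)
  have hnorm : ‖x₀ - p‖ = infDist x₀ C := by rw [← dist_eq_norm, hd]
  have ha_norm : ‖a‖ ≤ 1 := by
    rw [norm_smul, norm_inv, hnorm, Real.norm_of_nonneg infDist_nonneg]
    exact inv_mul_le_one
  have ha_self : inner ℝ a (x₀ - p) = infDist x₀ C := by
    rw [real_inner_smul_left, real_inner_self_eq_norm_sq, hnorm]
    rcases eq_or_ne (infDist x₀ C) 0 with h | h
    · simp [h]
    · field_simp
  refine (le_infDist ⟨p, hp⟩).2 fun q hq => ?_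
  have hq_obtuse : inner ℝ a (q - p) ≤ 0 := by
    rw [real_inner_smul_left]
    exact mul_nonpos_of_nonneg_of_nonpos (inv_nonneg.2 infDist_nonneg)
      (hC.real_inner_sub_le_zero_of_dist_eq_infDist hp hd q hq)
  calc infDist x₀ C + inner ℝ a (x - x₀)
      = inner ℝ a (x - q) + inner ℝ a (q - p) := by
        rw [← ha_self, ← inner_add_right, ← inner_add_right]
        congr 1
        abel
    _ ≤ ‖a‖ * ‖x - q‖ + 0 := add_le_add (real_inner_le_norm _ _) hq_obtuse
    _ ≤ dist x q := by
        rw [add_zero, dist_eq_norm]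
        exact mul_le_of_le_one_left (norm_nonneg _) ha_norm

end Subgradient

theorem heron_optimal_sufficient_general {s n : ℕ}
    (Ω : Set (EuclideanSpace ℝ (Fin s))) (Ωs : Fin n → Set (EuclideanSpace ℝ (Fin s)))
    (hcv : ∀ i, Convex ℝ (Ωs i))
    (xbar : EuclideanSpace ℝ (Fin s))
    (p : Fin n → EuclideanSpace ℝ (Fin s))
    (hp : ∀ i, p i ∈ Ωs i ∧ dist xbar (p i) = Metric.infDist xbar (Ωs i))
    (a : Fin n → EuclideanSpace ℝ (Fin s))
    (ha : ∀ i, a i = (Metric.infDist xbar (Ωs i))⁻¹ • (xbar - p i))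
    (hnc : ∀ x ∈ Ω, (inner ℝ (-(∑ i, a i)) (x - xbar) : ℝ) ≤ 0) :
    ∀ x ∈ Ω, ∑ i, Metric.infDist xbar (Ωs i) ≤ ∑ i, Metric.infDist x (Ωs i) := by
  intro x hx
  have hsubgrad : ∀ i, infDist xbar (Ωs i) + inner ℝ (a i) (x - xbar) ≤ infDist x (Ωs i) :=
    fun i => ha i ▸ (hcv i).infDist_add_real_inner_le_infDist (hp i).1 (hp i).2 x
  have hlinear : 0 ≤ ∑ i, inner ℝ (a i) (x - xbar) := by
    rw [← sum_inner, ← neg_nonpos, ← inner_neg_left]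
    exact hnc x hx
  calc ∑ i, infDist xbar (Ωs i)
      ≤ ∑ i, (infDist xbar (Ωs i) + inner ℝ (a i) (x - xbar)) := by
        rw [Finset.sum_add_distrib]
        linarith
    _ ≤ ∑ i, infDist x (Ωs i) := Finset.sum_le_sum fun i _ => hsubgrad i

/-- Sufficiency in Theorem 3.2: if `Ωᵢ ∩ Ω = ∅` for all `i` and
`-∑ i, aᵢ(xbar) ∈ N(xbar; Ω)`, where `aᵢ(xbar) = (xbar - Π(xbar; Ωᵢ)) / d(xbar; Ωᵢ)`,
then `xbar` solves the generalized Heron problem. -/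
theorem heron_optimal_sufficient {s n : ℕ}
    (Ω : Set (EuclideanSpace ℝ (Fin s))) (Ωs : Fin n → Set (EuclideanSpace ℝ (Fin s)))
    (hΩne : Ω.Nonempty) (hΩcl : IsClosed Ω) (hΩcv : Convex ℝ Ω)
    (hne : ∀ i, (Ωs i).Nonempty) (hcl : ∀ i, IsClosed (Ωs i)) (hcv : ∀ i, Convex ℝ (Ωs i))
    (hdisj : ∀ i, Ωs i ∩ Ω = ∅)
    (xbar : EuclideanSpace ℝ (Fin s)) (hxbar : xbar ∈ Ω)
    (p : Fin n → EuclideanSpace ℝ (Fin s))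
    (hp : ∀ i, p i ∈ Ωs i ∧ dist xbar (p i) = Metric.infDist xbar (Ωs i))
    (a : Fin n → EuclideanSpace ℝ (Fin s))
    (ha : ∀ i, a i = (Metric.infDist xbar (Ωs i))⁻¹ • (xbar - p i))
    (hnc : ∀ x ∈ Ω, (inner ℝ (-(∑ i, a i)) (x - xbar) : ℝ) ≤ 0) :
    ∀ x ∈ Ω, ∑ i, Metric.infDist xbar (Ωs i) ≤ ∑ i, Metric.infDist x (Ωs i) :=
  heron_optimal_sufficient_general Ω Ωs hcv xbar p hp a ha hnc
end

section
/- Let Ω, Ω₁, …, Ωₙ be nonempty closed convex subsets of ℝˢ with Ωᵢ ∩ Ω = ∅ for all i = 1, …, n, let x̄ ∈ Ω, and set aᵢ(x̄) = (x̄ − Π(x̄;Ωᵢ))/d(x̄;Ωᵢ). Suppose Ω has a tangent space at x̄, i.e., there is a linear subspace L ≠ {0} of ℝˢ with N(x̄;Ω) = L^⊥. Then x̄ is an optimal solution of the generalized Heron problem (D(x̄) ≤ D(x) for all x ∈ Ω, D(x) = ∑_{i=1}^n d(x;Ωᵢ)) if and only if ∑_{i=1}^n cos(aᵢ(x̄),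 u) = 0 for every u ∈ L \ {0}. -/
/-!
Off a convex set `K`, the distance `infDist · K` is differentiable with gradient the unit vector
`a = (x₀ - p) / d(x₀; K)`: the variational inequality of the projection `p` gives the lower bound
`d(x; K) ≥ d(x₀; K) + ⟪a, x - x₀⟫`, and `d(x; K) ≤ ‖x - p‖` gives the matching upper bound up to
`‖x - x₀‖² / (2 d(x₀; K))`. Since `D` is then differentiable at `x̄` with gradient `g = ∑ aᵢ` and
lies above its linearization, `x̄` minimizes `D` on the convex set `Ω` iff `⟪g, x - x̄⟫ ≥ 0` on `Ω`,
i.e. `-g ∈ N(x̄; Ω) = L^⊥`. As `‖aᵢ‖ = 1`, `∑ cos(aᵢ, u) = ⟪g, u⟫ / ‖u‖`.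
-/

open Metric Filter Asymptotics
open scoped RealInnerProductSpace

theorem infDist_pos_of_dist_eq {X : Type*} [MetricSpace X] {K : Set X} {x₀ p : X} (hp : p ∈ K)
    (hdist : dist x₀ p = infDist x₀ K) (hx₀ : x₀ ∉ K) : 0 < infDist x₀ K := by
  rw [← hdist, dist_pos]
  rintro rfl
  exact hx₀ hp

theorem isMinOn_iff_forall_fderiv_nonneg {E : Type*} [NormedAddCommGroup E] [NormedSpace ℝ E]
    {f : E → ℝ} {f' : E →L[ℝ] ℝ} {Ω : Set E} {x₀ : E} (hΩ : Convex ℝ Ω) (hx₀ : x₀ ∈ Ω)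
    (hf : HasFDerivWithinAt f f' Ω x₀) (hsub : ∀ x ∈ Ω, f x₀ + f' (x - x₀) ≤ f x) :
    IsMinOn f Ω x₀ ↔ ∀ x ∈ Ω, 0 ≤ f' (x - x₀) := by
  refine ⟨fun hmin x hx => ?_, fun hpos => isMinOn_iff.mpr fun x hx => ?_⟩
  · exact hmin.localize.hasFDerivWithinAt_nonneg hf
      (sub_mem_posTangentConeAt_of_segment_subset (hΩ.segment_subset hx₀ hx))
  · linarith [hsub x hx, hpos x hx]

section DistanceToConvexSet

variable {E : Type*} [NormedAddCommGroup E] [InnerProductSpace ℝ E] {K : Set E} {x₀ p : E}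

theorem norm_mul_norm_add_le (v w : E) : ‖v‖ * ‖v + w‖ ≤ ‖v‖ ^ 2 + ⟪v, w⟫ + ‖w‖ ^ 2 / 2 := by
  nlinarith [sq_nonneg (‖v + w‖ - ‖v‖), norm_add_sq_real v w]

theorem norm_inv_infDist_smul_sub (hp : p ∈ K) (hdist : dist x₀ p = infDist x₀ K)
    (hx₀ : x₀ ∉ K) : ‖(infDist x₀ K)⁻¹ • (x₀ - p)‖ = 1 := by
  rw [norm_smul, ← dist_eq_norm, hdist, norm_inv, Real.norm_of_nonneg infDist_nonneg,
    inv_mul_cancel₀ (infDist_pos_of_dist_eq hp hdist hx₀).ne']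

theorem infDist_add_inner_le_infDist (hK : Convex ℝ K) (hp : p ∈ K)
    (hdist : dist x₀ p = infDist x₀ K) (hx₀ : x₀ ∉ K) (x : E) :
    infDist x₀ K + ⟪(infDist x₀ K)⁻¹ • (x₀ - p), x - x₀⟫ ≤ infDist x K := by
  set d := infDist x₀ K
  have hd : 0 < d := infDist_pos_of_dist_eq hp hdist hx₀
  have hnorm : ‖x₀ - p‖ = d := by rw [← dist_eq_norm, hdist]
  have hproj : ∀ y ∈ K, ⟪x₀ - p, y - p⟫ ≤ 0 := by
    refine (norm_eq_iInf_iff_real_inner_le_zero hK hp).mp ?_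
    simp only [hnorm, d, infDist_eq_iInf, dist_eq_norm]
  rw [le_infDist ⟨p, hp⟩]
  intro y hy
  have hfar : d ^ 2 ≤ ⟪x₀ - p, x₀ - y⟫ := by
    have : x₀ - y = (x₀ - p) - (y - p) := by abel
    rw [this, inner_sub_right, real_inner_self_eq_norm_sq, hnorm]
    linarith [hproj y hy]
  have hcs : ⟪x₀ - p, x - y⟫ ≤ d * dist x y := by
    rw [dist_eq_norm, ← hnorm]
    exact real_inner_le_norm _ _
  have hsplit : ⟪x₀ - p, x - x₀⟫ = ⟪x₀ - p, x - y⟫ - ⟪x₀ - p, x₀ - y⟫ := by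
    rw [← inner_sub_right, sub_sub_sub_cancel_right]
  rw [real_inner_smul_left, hsplit, ← le_sub_iff_add_le', inv_mul_le_iff₀ hd]
  nlinarith

theorem infDist_add_le (hp : p ∈ K) (hdist : dist x₀ p = infDist x₀ K) (hx₀ : x₀ ∉ K) (h : E) :
    infDist (x₀ + h) K ≤
      infDist x₀ K + ⟪(infDist x₀ K)⁻¹ • (x₀ - p), h⟫ + ‖h‖ ^ 2 / (2 * infDist x₀ K) := by
  set d := infDist x₀ K
  have hd : 0 < d := infDist_pos_of_dist_eq hp hdist hx₀
  have hnorm : ‖x₀ - p‖ = d := by rw [← dist_eq_norm, hdist]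
  have hle : infDist (x₀ + h) K ≤ ‖(x₀ - p) + h‖ := by
    rw [sub_add_eq_add_sub, ← dist_eq_norm]
    exact infDist_le_dist_of_mem hp
  have key := norm_mul_norm_add_le (x₀ - p) h
  rw [hnorm] at key
  rw [real_inner_smul_left]
  calc infDist (x₀ + h) K ≤ ‖(x₀ - p) + h‖ := hle
    _ ≤ (d ^ 2 + ⟪x₀ - p, h⟫ + ‖h‖ ^ 2 / 2) / d := (le_div_iff₀ hd).mpr (by linarith)
    _ = d + d⁻¹ * ⟪x₀ - p, h⟫ + ‖h‖ ^ 2 / (2 * d) := by field_simp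

theorem hasFDerivAt_infDist (hK : Convex ℝ K) (hp : p ∈ K) (hdist : dist x₀ p = infDist x₀ K)
    (hx₀ : x₀ ∉ K) :
    HasFDerivAt (infDist · K) (innerSL ℝ ((infDist x₀ K)⁻¹ • (x₀ - p))) x₀ := by
  have hd : 0 < 2 * infDist x₀ K := by linarith [infDist_pos_of_dist_eq hp hdist hx₀]
  rw [hasFDerivAt_iff_isLittleO_nhds_zero]
  refine IsBigO.trans_isLittleO ?_ (isLittleO_norm_pow_id one_lt_two)
  refine IsBigO.of_bound (2 * infDist x₀ K)⁻¹ (Eventually.of_forall fun h => ?_)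
  have hlower := infDist_add_inner_le_infDist hK hp hdist hx₀ (x₀ + h)
  have hupper := infDist_add_le hp hdist hx₀ h
  rw [add_sub_cancel_left] at hlower
  rw [innerSL_apply_apply, Real.norm_eq_abs, Real.norm_eq_abs, abs_sq, ← div_eq_inv_mul,
    abs_le]
  constructor <;> linarith [div_nonneg (sq_nonneg ‖h‖) hd.le]

end DistanceToConvexSet

theorem heron_optimal_iff_cos_general {s n : ℕ}
    (Ω : Set (EuclideanSpace ℝ (Fin s))) (Ωs : Fin n → Set (EuclideanSpace ℝ (Fin s)))
    (hΩcv : Convex ℝ Ω)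
    (hcv : ∀ i, Convex ℝ (Ωs i))
    (hdisj : ∀ i, Ωs i ∩ Ω = ∅)
    (xbar : EuclideanSpace ℝ (Fin s)) (hxbar : xbar ∈ Ω)
    (p : Fin n → EuclideanSpace ℝ (Fin s))
    (hp : ∀ i, p i ∈ Ωs i ∧ dist xbar (p i) = Metric.infDist xbar (Ωs i))
    (a : Fin n → EuclideanSpace ℝ (Fin s))
    (ha : ∀ i, a i = (Metric.infDist xbar (Ωs i))⁻¹ • (xbar - p i))
    (L : Submodule ℝ (EuclideanSpace ℝ (Fin s)))
    (hN : {v : EuclideanSpace ℝ (Fin s) | ∀ x ∈ Ω, (inner ℝ v (x - xbar) : ℝ) ≤ 0}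
        = {v : EuclideanSpace ℝ (Fin s) | ∀ u ∈ L, (inner ℝ v u : ℝ) = 0}) :
    (∀ x ∈ Ω, ∑ i, Metric.infDist xbar (Ωs i) ≤ ∑ i, Metric.infDist x (Ωs i)) ↔
      (∀ u ∈ L, u ≠ 0 → ∑ i, (inner ℝ (a i) u : ℝ) / (‖a i‖ * ‖u‖) = 0) := by
  have hout (i) : xbar ∉ Ωs i := fun hx => (hdisj i).subset ⟨hx, hxbar⟩
  have hunit (i) : ‖a i‖ = 1 := ha i ▸ norm_inv_infDist_smul_sub (hp i).1 (hp i).2 (hout i)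
  set g := ∑ i, a i
  have hderiv : HasFDerivAt (fun x => ∑ i, infDist x (Ωs i)) (innerSL ℝ g) xbar := by
    rw [map_sum]
    exact HasFDerivAt.fun_sum fun i _ =>
      ha i ▸ hasFDerivAt_infDist (hcv i) (hp i).1 (hp i).2 (hout i)
  have hsub (x) : ∑ i, infDist xbar (Ωs i) + ⟪g, x - xbar⟫ ≤ ∑ i, infDist x (Ωs i) := by
    rw [sum_inner, ← Finset.sum_add_distrib]
    exact Finset.sum_le_sum fun i _ =>
      ha i ▸ infDist_add_inner_le_infDist (hcv i) (hp i).1 (hp i).2 (hout i) x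
  have hnormal : (∀ x ∈ Ω, 0 ≤ ⟪g, x - xbar⟫) ↔ ∀ u ∈ L, ⟪g, u⟫ = 0 := by
    simpa [inner_neg_left] using Set.ext_iff.mp hN (-g)
  have hcos (u) : ∑ i, ⟪a i, u⟫ / (‖a i‖ * ‖u‖) = ⟪g, u⟫ / ‖u‖ := by
    simp only [hunit, one_mul, g, sum_inner, Finset.sum_div]
  refine (isMinOn_iff_forall_fderiv_nonneg hΩcv hxbar hderiv.hasFDerivWithinAt
    fun x _ => hsub x).trans ?_
  simp only [innerSL_apply_apply, hnormal, hcos, div_eq_zero_iff, norm_eq_zero]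
  exact forall₂_congr fun u _ => ⟨fun h _ => .inl h, fun h => (eq_or_ne u 0).elim
    (fun hu => hu ▸ inner_zero_right g) fun hu => (h hu).resolve_right hu⟩

/-- Theorem 3.2, cosine characterization: if `Ω` has a tangent space `L ≠ {0}` at
`xbar` (i.e. `N(xbar; Ω) = L^⊥`) and `Ωᵢ ∩ Ω = ∅` for all `i`, then `xbar` is optimal
for the generalized Heron problem iff `∑ i, cos(aᵢ(xbar), u) = 0` for every nonzero
`u ∈ L`, where `aᵢ(xbar) = (xbar - Π(xbar; Ωᵢ)) / d(xbar; Ωᵢ)`. -/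
theorem heron_optimal_iff_cos {s n : ℕ}
    (Ω : Set (EuclideanSpace ℝ (Fin s))) (Ωs : Fin n → Set (EuclideanSpace ℝ (Fin s)))
    (hΩne : Ω.Nonempty) (hΩcl : IsClosed Ω) (hΩcv : Convex ℝ Ω)
    (hne : ∀ i, (Ωs i).Nonempty) (hcl : ∀ i, IsClosed (Ωs i)) (hcv : ∀ i, Convex ℝ (Ωs i))
    (hdisj : ∀ i, Ωs i ∩ Ω = ∅)
    (xbar : EuclideanSpace ℝ (Fin s)) (hxbar : xbar ∈ Ω)
    (p : Fin n → EuclideanSpace ℝ (Fin s))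
    (hp : ∀ i, p i ∈ Ωs i ∧ dist xbar (p i) = Metric.infDist xbar (Ωs i))
    (a : Fin n → EuclideanSpace ℝ (Fin s))
    (ha : ∀ i, a i = (Metric.infDist xbar (Ωs i))⁻¹ • (xbar - p i))
    (L : Submodule ℝ (EuclideanSpace ℝ (Fin s))) (hL : L ≠ ⊥)
    (hN : {v : EuclideanSpace ℝ (Fin s) | ∀ x ∈ Ω, (inner ℝ v (x - xbar) : ℝ) ≤ 0}
        = {v : EuclideanSpace ℝ (Fin s) | ∀ u ∈ L, (inner ℝ v u : ℝ) = 0}) :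
    (∀ x ∈ Ω, ∑ i, Metric.infDist xbar (Ωs i) ≤ ∑ i, Metric.infDist x (Ωs i)) ↔
      (∀ u ∈ L, u ≠ 0 → ∑ i, (inner ℝ (a i) u : ℝ) / (‖a i‖ * ‖u‖) = 0) :=
  heron_optimal_iff_cos_general Ω Ωs hΩcv hcv hdisj xbar hxbar p hp a ha L hN
end

section
/- (Moreau–Rockafellar sum rule) Let φ₁, …, φ_m : ℝˢ → (−∞, ∞] be closed (lower semicontinuous) convex extended-real-valued functions, and assume there is a point x₀ ∈ ⋂_{i=1}^m dom φᵢ at which all but possibly one of the functions φ₁, …, φ_m are continuous. Then for every x̄ ∈ ⋂_{i=1}^m dom φᵢ, the subdifferential of the sum equals the sum of subdifferentials: ∂(∑_{i=1}^m φᵢ)(x̄) = ∑_{i=1}^m ∂φᵢ(x̄). -/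
open scoped Pointwise

/-- The epigraph of an extended-real-valued function `f : ℝˢ → (-∞, ∞]`. -/
def ERealEpigraph {s : ℕ} (f : EuclideanSpace ℝ (Fin s) → EReal) :
    Set (EuclideanSpace ℝ (Fin s) × ℝ) :=
  {p | f p.1 ≤ (p.2 : EReal)}

/-- The subdifferential of an extended-real-valued convex function `f` at `xbar`:
all `v` with `⟨v, x - xbar⟩ ≤ f x - f xbar` for all `x` (inequality in the extended
reals). -/
def ERealSubdiff {s : ℕ} (f : EuclideanSpace ℝ (Fin s) → EReal)
    (xbar : EuclideanSpace ℝ (Fin s)) : Set (EuclideanSpace ℝ (Fin s)) :=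
  {v | ∀ x, ((inner ℝ v (x - xbar) : ℝ) : EReal) ≤ f x - f xbar}

/-!
The case of two functions carries the argument. If `v ∈ ∂(f + g)(x̄)`, the affine function
`h x = ⟪v, x - x̄⟫ + f x̄ + g x̄` lies below `f + g`, so the set strictly above the graph of `f` is
disjoint from the set of `(x, t)` with `t + g x ≤ h x`. Both are convex, and the first has
nonempty interior because `f` is continuous at `x₀`, so a closed hyperplane separates them; it is
not vertical because `x₀` lies in the domain of `g`. The hyperplane is the graph of an affine `ℓ`
with `ℓ ≤ f` and `h - ℓ ≤ g`, which forces `ℓ x̄ = f x̄`; hence the slope `u` of `ℓ` lies in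
`∂f(x̄)` and `v - u` in `∂g(x̄)`. For `m` functions, peel them off one at a time: in each step
either the new function or the sum of the remaining ones is continuous at `x₀`.
-/

open scoped RealInnerProductSpace

namespace EReal

theorem finset_sum_ne_bot {ι : Type*} {S : Finset ι} {f : ι → EReal} (h : ∀ i ∈ S, f i ≠ ⊥) :
    ∑ i ∈ S, f i ≠ ⊥ :=
  Finset.sum_induction f (· ≠ ⊥) (fun _ _ ha hb => add_ne_bot_iff.2 ⟨ha, hb⟩) zero_ne_bot h

theorem finset_sum_ne_top {ι : Type*} {S : Finset ι} {f : ι → EReal} (h : ∀ i ∈ S, f i ≠ ⊤) :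
    ∑ i ∈ S, f i ≠ ⊤ :=
  Finset.sum_induction f (· ≠ ⊤) (fun _ _ ha hb => (add_lt_top ha hb).ne) zero_ne_top h

theorem continuousAt_finset_sum {X ι : Type*} [TopologicalSpace X] {S : Finset ι}
    {f : ι → X → EReal} {x₀ : X} (hc : ∀ i ∈ S, ContinuousAt (f i) x₀)
    (hbot : ∀ i ∈ S, f i x₀ ≠ ⊥) : ContinuousAt (fun x => ∑ i ∈ S, f i x) x₀ := by
  have key := Finset.sum_induction f (fun F => ContinuousAt F x₀ ∧ F x₀ ≠ ⊥)
    (fun F G ⟨hF, hF'⟩ ⟨hG, hG'⟩ =>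
      ⟨(continuousAt_add (p := (F x₀, G x₀)) (Or.inr hG') (Or.inl hF')).comp
          (f := fun x => (F x, G x)) (hF.prodMk hG),
        add_ne_bot_iff.2 ⟨hF', hG'⟩⟩)
    ⟨continuousAt_const, zero_ne_bot⟩ fun i hi => ⟨hc i hi, hbot i hi⟩
  simpa only [Finset.sum_fn] using key.1

end EReal

section Epigraph

variable {E : Type*} [AddCommGroup E] [Module ℝ E]

theorem convex_strictEpigraph {f : E → EReal} (hf : Convex ℝ {p : E × ℝ | f p.1 ≤ p.2}) :
    Convex ℝ {p : E × ℝ | f p.1 < p.2} := by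
  intro p hp q hq a b ha hb hab
  obtain ⟨y, hpy, hy⟩ := EReal.exists_between_coe_real hp
  obtain ⟨z, hqz, hz⟩ := EReal.exists_between_coe_real hq
  have hyz := hf (x := (p.1, y)) (y := (q.1, z)) hpy.le hqz.le ha hb hab
  simp only [Set.mem_ofPred_eq, Prod.fst_add, Prod.smul_fst, Prod.snd_add, Prod.smul_snd,
    smul_eq_mul] at hyz ⊢
  refine hyz.trans_lt (EReal.coe_lt_coe_iff.2 ?_)
  rw [EReal.coe_lt_coe_iff] at hy hz
  rcases ha.eq_or_lt with rfl | ha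
  · rw [zero_add] at hab
    subst hab
    linarith
  · nlinarith

theorem convex_hypograph_affine_sub {g : E → EReal}
    (hg : Convex ℝ {p : E × ℝ | g p.1 ≤ p.2}) (h : E →ᵃ[ℝ] ℝ) :
    Convex ℝ {p : E × ℝ | g p.1 ≤ ((h p.1 - p.2 : ℝ) : EReal)} := by
  let shear : E × ℝ →ᵃ[ℝ] E × ℝ := AffineMap.fst.prod (h.comp AffineMap.fst - AffineMap.snd)
  exact hg.affine_preimage shear

theorem convex_epigraph_add {f g : E → EReal} (hf : Convex ℝ {p : E × ℝ | f p.1 ≤ p.2})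
    (hg : Convex ℝ {p : E × ℝ | g p.1 ≤ p.2}) (hfbot : ∀ x, f x ≠ ⊥) (hgbot : ∀ x, g x ≠ ⊥) :
    Convex ℝ {p : E × ℝ | f p.1 + g p.1 ≤ p.2} := by
  have hsplit : ∀ x (t : ℝ), f x + g x ≤ t → ∃ y z : ℝ, f x = y ∧ g x = z ∧ y + z ≤ t := by
    intro x t hxt
    have hf' : f x ≠ ⊤ := fun h => by simp [h, EReal.top_add_of_ne_bot (hgbot x)] at hxt
    have hg' : g x ≠ ⊤ := fun h => by simp [h, EReal.add_top_of_ne_bot (hfbot x)] at hxt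
    refine ⟨_, _, (EReal.coe_toReal hf' (hfbot x)).symm, (EReal.coe_toReal hg' (hgbot x)).symm, ?_⟩
    rwa [← EReal.coe_le_coe_iff, EReal.coe_add, EReal.coe_toReal hf' (hfbot x),
      EReal.coe_toReal hg' (hgbot x)]
  intro p hp q hq a b ha hb hab
  obtain ⟨y₁, z₁, hy₁, hz₁, hp⟩ := hsplit _ _ hp
  obtain ⟨y₂, z₂, hy₂, hz₂, hq⟩ := hsplit _ _ hq
  have hF := hf (x := (p.1, y₁)) (y := (q.1, y₂)) hy₁.le hy₂.le ha hb hab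
  have hG := hg (x := (p.1, z₁)) (y := (q.1, z₂)) hz₁.le hz₂.le ha hb hab
  simp only [Set.mem_ofPred_eq, Prod.fst_add, Prod.smul_fst, Prod.snd_add, Prod.smul_snd,
    smul_eq_mul] at hF hG ⊢
  calc _ ≤ ((a * y₁ + b * y₂ : ℝ) : EReal) + ((a * z₁ + b * z₂ : ℝ) : EReal) := add_le_add hF hG
    _ ≤ _ := by
      rw [← EReal.coe_add, EReal.coe_le_coe_iff]
      nlinarith

theorem convex_epigraph_finset_sum {ι : Type*} (S : Finset ι) {f : ι → E → EReal}
    (hf : ∀ i, Convex ℝ {p : E × ℝ | f i p.1 ≤ p.2}) (hbot : ∀ i x, f i x ≠ ⊥) :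
    Convex ℝ {p : E × ℝ | ∑ i ∈ S, f i p.1 ≤ p.2} := by
  have key := Finset.sum_induction (s := S) f
    (fun F => Convex ℝ {p : E × ℝ | F p.1 ≤ p.2} ∧ ∀ x, F x ≠ ⊥)
    (fun F G ⟨hF, hF'⟩ ⟨hG, hG'⟩ =>
      ⟨convex_epigraph_add hF hG hF' hG', fun x => EReal.add_ne_bot_iff.2 ⟨hF' x, hG' x⟩⟩)
    ⟨by simpa using convex_halfSpace_ge (LinearMap.snd ℝ E ℝ).isLinear 0,
      fun _ => EReal.zero_ne_bot⟩
    fun i _ => ⟨hf i, hbot i⟩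
  simpa only [Finset.sum_apply] using key.1

end Epigraph

theorem ContinuousLinearMap.apply_prodMk_eq {E : Type*} [AddCommGroup E] [Module ℝ E]
    [TopologicalSpace E] (L : E × ℝ →L[ℝ] ℝ) (x : E) (t : ℝ) :
    L (x, t) = L (x, 0) + t * L (0, 1) := by
  rw [← smul_eq_mul, ← L.map_smul, ← map_add]
  simp

section Separation

variable {E : Type*} [AddCommGroup E] [Module ℝ E] [TopologicalSpace E] [IsTopologicalAddGroup E]
  [ContinuousSMul ℝ E]

theorem geometric_hahn_banach_of_nonempty_interior_strict {s t : Set E} (hs : Convex ℝ s)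
    (hs' : (interior s).Nonempty) (ht : Convex ℝ t) (hst : Disjoint s t) :
    ∃ (L : E →L[ℝ] ℝ) (c : ℝ),
      (∀ a ∈ s, L a ≤ c) ∧ (∀ a ∈ interior s, L a < c) ∧ ∀ b ∈ t, c ≤ L b := by
  obtain ⟨L, c, hLs, hLt⟩ :=
    geometric_hahn_banach_open hs.interior isOpen_interior ht (hst.mono_left interior_subset)
  refine ⟨L, c, fun a ha => ?_, hLs, hLt⟩
  have ha' : a ∈ closure (interior s) := by
    rw [hs.closure_interior_eq_closure_of_nonempty_interior hs']
    exact subset_closure ha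
  exact closure_lt_subset_le L.continuous continuous_const (closure_mono hLs ha')

theorem exists_separation_of_le_add {f g : E → EReal}
    (hf : Convex ℝ {p : E × ℝ | f p.1 ≤ p.2}) (hg : Convex ℝ {p : E × ℝ | g p.1 ≤ p.2})
    {x₀ : E} (hfc : ContinuousAt f x₀) (hfx₀ : f x₀ ≠ ⊤) (hgx₀ : g x₀ ≠ ⊤)
    (h : E →ᵃ[ℝ] ℝ) (hle : ∀ x, (h x : EReal) ≤ f x + g x) :
    ∃ (L : E × ℝ →L[ℝ] ℝ) (c : ℝ), L (0, 1) < 0 ∧ (∀ x (t : ℝ), f x < t → L (x, t) ≤ c) ∧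
      ∀ x (t : ℝ), g x ≤ t → c ≤ L (x, h x - t) := by
  set A := {p : E × ℝ | f p.1 < p.2}
  set B := {p : E × ℝ | g p.1 ≤ ((h p.1 - p.2 : ℝ) : EReal)}
  have hAB : Disjoint A B := by
    refine Set.disjoint_left.2 fun p hpA hpB => (hle p.1).not_gt ?_
    have hgbot : g p.1 ≠ ⊥ :=
      (EReal.add_ne_bot_iff.1 (ne_bot_of_le_ne_bot (EReal.coe_ne_bot _) (hle p.1))).2
    have := EReal.add_lt_add_of_lt_of_le hpA hpB hgbot (EReal.coe_ne_top _)
    rwa [← EReal.coe_add, add_sub_cancel] at this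
  have hmemB : ∀ x (t : ℝ), g x ≤ t → (x, h x - t) ∈ B := fun x t ht => by
    rwa [Set.mem_ofPred_eq, sub_sub_cancel]
  have hint : ∀ t : ℝ, f x₀ < t → (x₀, t) ∈ interior A := fun t ht =>
    mem_interior_iff_mem_nhds.2 <| (hfc.comp (f := Prod.fst) continuousAt_fst).eventually_lt
      (continuous_coe_real_ereal.comp continuous_snd).continuousAt ht
  obtain ⟨t₀, ht₀, -⟩ := EReal.exists_between_coe_real hfx₀.lt_top
  obtain ⟨L, c, hLA, hLint, hLB⟩ := geometric_hahn_banach_of_nonempty_interior_strict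
    (convex_strictEpigraph hf) ⟨_, hint t₀ ht₀⟩ (convex_hypograph_affine_sub hg h) hAB
  refine ⟨L, c, ?_, fun x t ht => hLA (x, t) ht, fun x t ht => hLB _ (hmemB x t ht)⟩
  -- on the vertical line through `x₀`, a point of `interior A` lies strictly above a point of `B`
  set s := h x₀ - (g x₀).toReal
  set t := max s t₀ + 1
  have ht : t₀ < t := by linarith [le_max_right s t₀]
  have hlt := hLint _ (hint t (ht₀.trans (EReal.coe_lt_coe_iff.2 ht)))
  have hge := hLB _ (hmemB x₀ _ (EReal.le_coe_toReal hgx₀))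
  rw [L.apply_prodMk_eq] at hlt hge
  nlinarith [le_max_left s t₀]

theorem exists_affine_between_of_le_add {f g : E → EReal}
    (hf : Convex ℝ {p : E × ℝ | f p.1 ≤ p.2}) (hg : Convex ℝ {p : E × ℝ | g p.1 ≤ p.2})
    {x₀ : E} (hfc : ContinuousAt f x₀) (hfx₀ : f x₀ ≠ ⊤) (hgx₀ : g x₀ ≠ ⊤)
    (h : E →ᵃ[ℝ] ℝ) (hle : ∀ x, (h x : EReal) ≤ f x + g x) :
    ∃ (ψ : E →L[ℝ] ℝ) (r : ℝ),
      ∀ x, ((ψ x + r : ℝ) : EReal) ≤ f x ∧ ((h x - (ψ x + r) : ℝ) : EReal) ≤ g x := by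
  obtain ⟨L, c, hα, hLf, hLg⟩ := exists_separation_of_le_add hf hg hfc hfx₀ hgx₀ h hle
  set α := L (0, 1)
  refine ⟨-α⁻¹ • L.comp (ContinuousLinearMap.inl ℝ E ℝ), c / α, fun x => ?_⟩
  have hℓ : (-α⁻¹ • L.comp (ContinuousLinearMap.inl ℝ E ℝ)) x + c / α = (c - L (x, 0)) / α := by
    simp only [smul_apply, ContinuousLinearMap.comp_apply, ContinuousLinearMap.inl_apply,
      smul_eq_mul]
    ring
  rw [hℓ]
  constructor
  · refine EReal.le_of_forall_lt_iff_le.1 fun t ht => EReal.coe_le_coe_iff.2 ?_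
    have hLt := hLf x t ht
    rw [L.apply_prodMk_eq] at hLt
    rw [div_le_iff_of_neg hα]
    linarith
  · refine EReal.le_of_forall_lt_iff_le.1 fun t ht => EReal.coe_le_coe_iff.2 ?_
    have hLt := hLg x t ht.le
    rw [L.apply_prodMk_eq] at hLt
    have := (le_div_iff_of_neg hα).2 (by linarith : c - L (x, 0) ≤ (h x - t) * α)
    linarith

end Separation

section Subdifferential

variable {s : ℕ}

local notation "ℝˢ" => EuclideanSpace ℝ (Fin s)

theorem mem_erealSubdiff_iff {f : ℝˢ → EReal} {xbar : ℝˢ} {a : ℝ} (ha : f xbar = a) {v : ℝˢ} :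
    v ∈ ERealSubdiff f xbar ↔ ∀ x, ((⟪v, x - xbar⟫ + a : ℝ) : EReal) ≤ f x := by
  simp only [ERealSubdiff, Set.mem_ofPred_eq, ha, EReal.coe_add]
  exact forall_congr' fun x =>
    EReal.le_sub_iff_add_le (Or.inl (EReal.coe_ne_bot a)) (Or.inl (EReal.coe_ne_top a))

theorem erealSubdiff_zero (xbar : ℝˢ) : ERealSubdiff (fun _ => (0 : EReal)) xbar = 0 := by
  ext v
  rw [mem_erealSubdiff_iff EReal.coe_zero.symm, Set.mem_zero]
  refine ⟨fun hv => ?_, fun hv x => by simp [hv]⟩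
  have hvv := hv (xbar + v)
  rw [add_sub_cancel_left, add_zero, ← EReal.coe_zero, EReal.coe_le_coe_iff] at hvv
  exact inner_self_eq_zero.1 (le_antisymm hvv real_inner_self_nonneg)

theorem add_subset_erealSubdiff_add {f g : ℝˢ → EReal} {xbar : ℝˢ} {a b : ℝ}
    (ha : f xbar = a) (hb : g xbar = b) :
    ERealSubdiff f xbar + ERealSubdiff g xbar ⊆ ERealSubdiff (fun x => f x + g x) xbar := by
  rintro _ ⟨v, hv, w, hw, rfl⟩
  rw [mem_erealSubdiff_iff ha] at hv
  rw [mem_erealSubdiff_iff hb] at hw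
  rw [mem_erealSubdiff_iff (a := a + b) (by rw [ha, hb, EReal.coe_add])]
  intro x
  calc ((⟪v + w, x - xbar⟫ + (a + b) : ℝ) : EReal)
      = ((⟪v, x - xbar⟫ + a : ℝ) : EReal) + ((⟪w, x - xbar⟫ + b : ℝ) : EReal) := by
        rw [inner_add_left, ← EReal.coe_add]
        ring_nf
    _ ≤ f x + g x := add_le_add (hv x) (hw x)

theorem erealSubdiff_add_subset_of_continuousAt {f g : ℝˢ → EReal}
    (hf : Convex ℝ {p : ℝˢ × ℝ | f p.1 ≤ p.2}) (hg : Convex ℝ {p : ℝˢ × ℝ | g p.1 ≤ p.2})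
    {x₀ : ℝˢ} (hfc : ContinuousAt f x₀) (hfx₀ : f x₀ ≠ ⊤) (hgx₀ : g x₀ ≠ ⊤)
    {xbar : ℝˢ} {a b : ℝ} (ha : f xbar = a) (hb : g xbar = b) :
    ERealSubdiff (fun x => f x + g x) xbar ⊆ ERealSubdiff f xbar + ERealSubdiff g xbar := by
  intro v hv
  rw [mem_erealSubdiff_iff (a := a + b) (by rw [ha, hb, EReal.coe_add])] at hv
  let h : ℝˢ →ᵃ[ℝ] ℝ := (innerₛₗ ℝ v).toAffineMap + AffineMap.const ℝ ℝˢ (a + b - ⟪v, xbar⟫)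
  have hh : ∀ x, h x = ⟪v, x - xbar⟫ + (a + b) := fun x => by
    simp only [h, AffineMap.coe_add, LinearMap.coe_toAffineMap, coe_innerₛₗ_apply,
      AffineMap.coe_const, Pi.add_apply, Function.const_apply, inner_sub_right]
    ring
  obtain ⟨ψ, r, hψ⟩ := exists_affine_between_of_le_add hf hg hfc hfx₀ hgx₀ h
    fun x => hh x ▸ hv x
  set u := (InnerProductSpace.toDual ℝ ℝˢ).symm ψ
  have hu : ∀ x, ⟪u, x⟫ = ψ x := fun x => InnerProductSpace.toDual_symm_apply
  have hr : ψ xbar + r = a := by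
    have h₁ := (hψ xbar).1
    have h₂ := (hψ xbar).2
    rw [ha, EReal.coe_le_coe_iff] at h₁
    rw [hb, EReal.coe_le_coe_iff, hh, sub_self, inner_zero_right] at h₂
    linarith
  have hℓ : ∀ x, ψ x + r = ⟪u, x - xbar⟫ + a := fun x => by
    rw [inner_sub_right, hu, hu]
    linarith
  refine ⟨u, (mem_erealSubdiff_iff ha).2 fun x => ?_, v - u,
    (mem_erealSubdiff_iff hb).2 fun x => ?_, add_sub_cancel _ _⟩
  · rw [← hℓ]
    exact (hψ x).1
  · convert (hψ x).2 using 2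
    rw [hℓ, hh, inner_sub_left]
    ring

theorem erealSubdiff_add {f g : ℝˢ → EReal}
    (hf : Convex ℝ {p : ℝˢ × ℝ | f p.1 ≤ p.2}) (hg : Convex ℝ {p : ℝˢ × ℝ | g p.1 ≤ p.2})
    {x₀ : ℝˢ} (hcont : ContinuousAt f x₀ ∨ ContinuousAt g x₀) (hfx₀ : f x₀ ≠ ⊤)
    (hgx₀ : g x₀ ≠ ⊤) {xbar : ℝˢ} {a b : ℝ} (ha : f xbar = a) (hb : g xbar = b) :
    ERealSubdiff (fun x => f x + g x) xbar = ERealSubdiff f xbar + ERealSubdiff g xbar := by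
  refine subset_antisymm ?_ (add_subset_erealSubdiff_add ha hb)
  rcases hcont with hfc | hgc
  · exact erealSubdiff_add_subset_of_continuousAt hf hg hfc hfx₀ hgx₀ ha hb
  · simp only [add_comm (f _), add_comm (ERealSubdiff f xbar)]
    exact erealSubdiff_add_subset_of_continuousAt hg hf hgc hgx₀ hfx₀ hb ha

theorem erealSubdiff_finset_sum {ι : Type*} (S : Finset ι) {φ : ι → ℝˢ → EReal}
    (hbot : ∀ i x, φ i x ≠ ⊥) (hconvex : ∀ i, Convex ℝ (ERealEpigraph (φ i)))
    {x₀ : ℝˢ} (hx₀ : ∀ i, φ i x₀ ≠ ⊤) (i₀ : ι) (hcont : ∀ i, i ≠ i₀ → ContinuousAt (φ i) x₀)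
    {xbar : ℝˢ} (hxbar : ∀ i, φ i xbar ≠ ⊤) :
    ERealSubdiff (fun x => ∑ i ∈ S, φ i x) xbar = ∑ i ∈ S, ERealSubdiff (φ i) xbar := by
  induction S using Finset.cons_induction with
  | empty => simpa using erealSubdiff_zero xbar
  | cons a S haS ih =>
    have hcont' : ContinuousAt (φ a) x₀ ∨ ContinuousAt (fun x => ∑ i ∈ S, φ i x) x₀ := by
      by_cases ha : a = i₀
      · subst ha
        exact Or.inr <| EReal.continuousAt_finset_sum
          (fun i hi => hcont i fun h => haS (h ▸ hi)) fun i _ => hbot i x₀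
      · exact Or.inl (hcont a ha)
    simp only [Finset.sum_cons]
    rw [erealSubdiff_add (hconvex a) (convex_epigraph_finset_sum S hconvex hbot) hcont' (hx₀ a)
      (EReal.finset_sum_ne_top fun i _ => hx₀ i)
      (EReal.coe_toReal (hxbar a) (hbot a xbar)).symm
      (EReal.coe_toReal (EReal.finset_sum_ne_top fun i _ => hxbar i)
        (EReal.finset_sum_ne_bot fun i _ => hbot i xbar)).symm, ih]

end Subdifferential

theorem moreau_rockafellar_sum_rule_general {s m : ℕ}
    (φ : Fin m → EuclideanSpace ℝ (Fin s) → EReal)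
    (hbot : ∀ i x, φ i x ≠ ⊥)
    (hconvex : ∀ i, Convex ℝ (ERealEpigraph (φ i)))
    (x₀ : EuclideanSpace ℝ (Fin s)) (hx₀ : ∀ i, φ i x₀ < ⊤)
    (i₀ : Fin m) (hcont : ∀ i, i ≠ i₀ → ContinuousAt (φ i) x₀)
    (xbar : EuclideanSpace ℝ (Fin s)) (hxbar : ∀ i, φ i xbar < ⊤) :
    ERealSubdiff (fun x => ∑ i, φ i x) xbar = ∑ i, ERealSubdiff (φ i) xbar :=
  erealSubdiff_finset_sum Finset.univ hbot hconvex (fun i => (hx₀ i).ne) i₀ hcont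
    fun i => (hxbar i).ne

/-- Moreau–Rockafellar sum rule: if `φ₁, …, φ_m : ℝˢ → (-∞, ∞]` are closed convex
functions and there is `x₀` in the intersection of their domains at which all but
possibly one of them are continuous, then for every `xbar` in the intersection of
the domains, `∂(∑ i, φᵢ)(xbar) = ∑ i, ∂φᵢ(xbar)` (Minkowski sum). -/
theorem moreau_rockafellar_sum_rule {s m : ℕ}
    (φ : Fin m → EuclideanSpace ℝ (Fin s) → EReal)
    (hbot : ∀ i x, φ i x ≠ ⊥)
    (hclosed : ∀ i, IsClosed (ERealEpigraph (φ i)))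
    (hconvex : ∀ i, Convex ℝ (ERealEpigraph (φ i)))
    (x₀ : EuclideanSpace ℝ (Fin s)) (hx₀ : ∀ i, φ i x₀ < ⊤)
    (i₀ : Fin m) (hcont : ∀ i, i ≠ i₀ → ContinuousAt (φ i) x₀)
    (xbar : EuclideanSpace ℝ (Fin s)) (hxbar : ∀ i, φ i xbar < ⊤) :
    ERealSubdiff (fun x => ∑ i, φ i x) xbar = ∑ i, ERealSubdiff (φ i) xbar :=
  moreau_rockafellar_sum_rule_general φ hbot hconvex x₀ hx₀ i₀ hcont xbar hxbar
end

section
/- Let f : ℝˢ → ℝ be a convex (hence continuous) function and Ω a nonempty closed convex subset of ℝˢ. A point x̄ ∈ Ω minimizes f over Ω (f(x̄) ≤ f(x) for all x ∈ Ω) if and only if there is a subgradient v of f at x̄ (i.e., ⟨v, x − x̄⟩ ≤ f(x) − f(x̄) for all x ∈ ℝˢ) with −v ∈ N(x̄;Ω), that is, 0 ∈ ∂f(x̄) + N(x̄;Ω). -/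
/-!
Separate the open convex strict epigraph of `f` from `Ω × (-∞, f x̄]` by a continuous linear
functional `L` on `E × ℝ`; minimality of `x̄` makes the two sets disjoint. Passing to the closure
of the epigraph, `L (x, f x) ≤ L (y, f x̄)` for every `x` and every `y ∈ Ω`. The epigraph is
unbounded upwards, so `L` decreases in the vertical direction; rescaling the horizontal part of
`L` by that slope gives the subgradient `v`, and the inequality at `x = x̄` says `-v` is normal.
-/

open Filter Set

section Separation

variable {E : Type*} [TopologicalSpace E] [AddCommGroup E] [Module ℝ E]
  [IsTopologicalAddGroup E] [ContinuousSMul ℝ E]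

theorem exists_clm_graph_le_of_isMinOn {f : E → ℝ} {C : Set E} {x₀ : E}
    (hf : ConvexOn ℝ univ f) (hfc : Continuous f) (hC : Convex ℝ C) (hx₀ : x₀ ∈ C)
    (hmin : IsMinOn f C x₀) :
    ∃ L : StrongDual ℝ (E × ℝ), L (0, 1) < 0 ∧ ∀ x, ∀ y ∈ C, L (x, f x) ≤ L (y, f x₀) := by
  have hA : IsOpen {p : E × ℝ | p.1 ∈ univ ∧ f p.1 < p.2} := by
    simpa only [mem_univ, true_and] using isOpen_lt (by fun_prop) continuous_snd
  have hdisj : Disjoint {p : E × ℝ | p.1 ∈ univ ∧ f p.1 < p.2} (C ×ˢ Iic (f x₀)) := by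
    rw [disjoint_left]
    rintro ⟨x, t⟩ ⟨-, hxt⟩ ⟨hx, ht⟩
    exact (hxt.trans_le ht).not_ge (hmin hx)
  obtain ⟨L, u, hLA, hLB⟩ :=
    geometric_hahn_banach_open hf.convex_strict_epigraph hA (hC.prod (convex_Iic _)) hdisj
  have graph_le : ∀ x, L (x, f x) ≤ u := fun x => by
    have hcont : Continuous fun t : ℝ => L (x, t) := L.continuous.comp (Continuous.prodMk_right x)
    exact le_of_tendsto ((hcont.tendsto (f x)).mono_left nhdsWithin_le_nhds)
      (eventually_nhdsWithin_of_forall (s := Ioi (f x)) fun t ht =>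
        (hLA (x, t) ⟨mem_univ x, ht⟩).le)
  have hLB' : ∀ y ∈ C, u ≤ L (y, f x₀) := fun y hy => hLB (y, f x₀) ⟨hy, mem_Iic.mpr le_rfl⟩
  refine ⟨L, ?_, fun x y hy => (graph_le x).trans (hLB' y hy)⟩
  have hvert : L (x₀, f x₀ + 1) = L (x₀, f x₀) + L (0, 1) := by
    rw [← map_add, Prod.mk_add_mk, add_zero]
  have hstrict := (hLA (x₀, f x₀ + 1) ⟨mem_univ x₀, lt_add_one _⟩).trans_le (hLB' x₀ hx₀)
  linarith

end Separation

section Subgradient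

variable {E : Type*} [NormedAddCommGroup E] [NormedSpace ℝ E]

theorem StrongDual.prod_apply_eq (L : StrongDual ℝ (E × ℝ)) (x : E) (t : ℝ) :
    L (x, t) = L (x, 0) + t * L (0, 1) := by
  rw [← smul_eq_mul, ← map_smul, ← map_add, Prod.smul_mk, smul_zero, smul_eq_mul, mul_one,
    Prod.mk_add_mk, add_zero, zero_add]

theorem exists_subgradient_nonneg_of_isMinOn {f : E → ℝ} {C : Set E} {x₀ : E}
    (hf : ConvexOn ℝ univ f) (hfc : Continuous f) (hC : Convex ℝ C) (hx₀ : x₀ ∈ C)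
    (hmin : IsMinOn f C x₀) :
    ∃ φ : StrongDual ℝ E, (∀ x, φ (x - x₀) ≤ f x - f x₀) ∧ ∀ y ∈ C, 0 ≤ φ (y - x₀) := by
  obtain ⟨L, hα, hL⟩ := exists_clm_graph_le_of_isMinOn hf hfc hC hx₀ hmin
  set α := L (0, 1)
  let φ : StrongDual ℝ E := (-α)⁻¹ • L.comp (ContinuousLinearMap.inl ℝ E ℝ)
  have hφ : ∀ w, φ w = L (w, 0) / -α := fun w => by
    simp only [φ, smul_apply, ContinuousLinearMap.comp_apply,
      ContinuousLinearMap.inl_apply, smul_eq_mul, div_eq_inv_mul]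
  have hsub : ∀ x y, L (x - y, 0) = L (x, 0) - L (y, 0) := fun x y => by
    rw [← map_sub, Prod.mk_sub_mk, sub_zero]
  have hneg : 0 < -α := neg_pos.mpr hα
  refine ⟨φ, fun x => ?_, fun y hy => ?_⟩
  · have key := hL x x₀ hx₀
    rw [L.prod_apply_eq x, L.prod_apply_eq x₀] at key
    rw [hφ, hsub, div_le_iff₀ hneg]
    linarith
  · have key := hL x₀ y hy
    rw [L.prod_apply_eq x₀, L.prod_apply_eq y] at key
    rw [hφ, hsub]
    exact div_nonneg (by linarith) hneg.le

end Subgradient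

theorem convex_isMinOn_iff_subgradient_normalCone_general {s : ℕ}
    (f : EuclideanSpace ℝ (Fin s) → ℝ) (hf : ConvexOn ℝ Set.univ f)
    (Ω : Set (EuclideanSpace ℝ (Fin s)))
    (hΩcv : Convex ℝ Ω)
    (xbar : EuclideanSpace ℝ (Fin s)) (hxbar : xbar ∈ Ω) :
    (∀ x ∈ Ω, f xbar ≤ f x) ↔
      ∃ v : EuclideanSpace ℝ (Fin s),
        (∀ x, (inner ℝ v (x - xbar) : ℝ) ≤ f x - f xbar) ∧
        (∀ x ∈ Ω, (inner ℝ (-v) (x - xbar) : ℝ) ≤ 0) := by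
  constructor
  · intro hmin
    have hfc : Continuous f := continuousOn_univ.mp (hf.continuousOn isOpen_univ)
    obtain ⟨φ, hsub, hnormal⟩ :=
      exists_subgradient_nonneg_of_isMinOn hf hfc hΩcv hxbar fun x hx => hmin x hx
    refine ⟨(InnerProductSpace.toDual ℝ _).symm φ, fun x => ?_, fun x hx => ?_⟩
    · rw [InnerProductSpace.toDual_symm_apply]
      exact hsub x
    · rw [inner_neg_left, InnerProductSpace.toDual_symm_apply, neg_nonpos]
      exact hnormal x hx
  · rintro ⟨v, hsub, hnormal⟩ x hx
    have := hnormal x hx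
    rw [inner_neg_left, neg_nonpos] at this
    linarith [hsub x]

/-- A point `xbar ∈ Ω` minimizes a convex function `f : ℝˢ → ℝ` over a nonempty
closed convex set `Ω` iff `0 ∈ ∂f(xbar) + N(xbar; Ω)`, i.e. there is a subgradient
`v` of `f` at `xbar` with `-v` in the normal cone to `Ω` at `xbar`. -/
theorem convex_isMinOn_iff_subgradient_normalCone {s : ℕ}
    (f : EuclideanSpace ℝ (Fin s) → ℝ) (hf : ConvexOn ℝ Set.univ f)
    (Ω : Set (EuclideanSpace ℝ (Fin s)))
    (hΩne : Ω.Nonempty) (hΩcl : IsClosed Ω) (hΩcv : Convex ℝ Ω)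
    (xbar : EuclideanSpace ℝ (Fin s)) (hxbar : xbar ∈ Ω) :
    (∀ x ∈ Ω, f xbar ≤ f x) ↔
      ∃ v : EuclideanSpace ℝ (Fin s),
        (∀ x, (inner ℝ v (x - xbar) : ℝ) ≤ f x - f xbar) ∧
        (∀ x ∈ Ω, (inner ℝ (-v) (x - xbar) : ℝ) ≤ 0) :=
  convex_isMinOn_iff_subgradient_normalCone_general f hf Ω hΩcv xbar hxbar
end

section
/- Let Ω be a nonempty closed convex subset of ℝˢ and let x̄ ∉ Ω. Then the subdifferential of the distance function d(·;Ω) at x̄ is the singleton {(x̄ − Π(x̄;Ω))/d(x̄;Ω)}; that is, a vector v satisfies ⟨v, x − x̄⟩ ≤ d(x;Ω) − d(x̄;Ω) for all x ∈ ℝˢ if and only if v = (x̄ − Π(x̄;Ω))/d(x̄;Ω). -/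
/-!
Write `u = xbar - p`, so `‖u‖ = d(xbar; Ω) > 0`. Since `p` is the projection, `⟪u, y - p⟫ ≤ 0`
on `Ω`, and with Cauchy–Schwarz this gives `⟪u / ‖u‖, z - p⟫ ≤ d(z; Ω)` for every `z`: the
subgradient inequality for `u / ‖u‖`. Conversely, a subgradient `v` of the `1`-Lipschitz function
`d(·; Ω)` has `‖v‖ ≤ 1`, and testing the inequality at `p` gives `‖u‖ ≤ ⟪v, u⟫`; this is the
equality case of Cauchy–Schwarz, which forces `v = u / ‖u‖`.
-/

open Metric
open scoped NNReal RealInnerProductSpace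

section

variable {E : Type*} [NormedAddCommGroup E] [InnerProductSpace ℝ E]

theorem LipschitzWith.norm_le_of_forall_inner_sub_le_sub {f : E → ℝ} {K : ℝ≥0}
    (hf : LipschitzWith K f) {v x₀ : E} (hv : ∀ x, ⟪v, x - x₀⟫ ≤ f x - f x₀) : ‖v‖ ≤ K := by
  rcases eq_or_ne v 0 with rfl | hv0
  · simp
  have hsq : ‖v‖ * ‖v‖ ≤ K * ‖v‖ :=
    calc ‖v‖ * ‖v‖ = ⟪v, (x₀ + v) - x₀⟫ := by
          rw [add_sub_cancel_left, real_inner_self_eq_norm_mul_norm]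
      _ ≤ f (x₀ + v) - f x₀ := hv _
      _ ≤ dist (f (x₀ + v)) (f x₀) := le_abs_self _
      _ ≤ K * dist (x₀ + v) x₀ := hf.dist_le_mul _ _
      _ = K * ‖v‖ := by rw [dist_eq_norm, add_sub_cancel_left]
  exact le_of_mul_le_mul_right hsq (norm_pos_iff.2 hv0)

theorem smul_eq_of_norm_le_one_of_norm_le_inner {u v : E} (hv : ‖v‖ ≤ 1)
    (hu : ‖u‖ ≤ ⟪v, u⟫) : ‖u‖ • v = u := by
  rcases eq_or_ne u 0 with rfl | hu0
  · simp
  have hvu : ‖v‖ * ‖u‖ ≤ ‖u‖ := mul_le_of_le_one_left (norm_nonneg u) hv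
  have hcs : ⟪v, u⟫ = ‖v‖ * ‖u‖ := le_antisymm (real_inner_le_norm v u) (hvu.trans hu)
  have hv1 : ‖v‖ = 1 :=
    le_antisymm hv (le_of_mul_le_mul_right (by rw [one_mul, ← hcs]; exact hu)
      (norm_pos_iff.2 hu0))
  rw [inner_eq_norm_mul_iff_real.1 hcs, hv1, one_smul]

theorem Convex.inner_sub_le_zero_of_dist_eq_infDist {Ω : Set E} (hΩ : Convex ℝ Ω) {x p y : E}
    (hp : p ∈ Ω) (hd : dist x p = infDist x Ω) (hy : y ∈ Ω) : ⟪x - p, y - p⟫ ≤ 0 := by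
  refine (norm_eq_iInf_iff_real_inner_le_zero hΩ hp).1 ?_ y hy
  simp_rw [← dist_eq_norm, hd, infDist_eq_iInf]

theorem inner_sub_le_infDist {Ω : Set E} {w p : E} (hw : ‖w‖ ≤ 1) (hp : p ∈ Ω)
    (hnormal : ∀ y ∈ Ω, ⟪w, y - p⟫ ≤ 0) (z : E) : ⟪w, z - p⟫ ≤ infDist z Ω := by
  refine (le_infDist ⟨p, hp⟩).2 fun y hy => ?_
  calc ⟪w, z - p⟫ = ⟪w, z - y⟫ + ⟪w, y - p⟫ := by rw [← inner_add_right, sub_add_sub_cancel]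
    _ ≤ ‖w‖ * ‖z - y‖ + 0 := add_le_add (real_inner_le_norm _ _) (hnormal y hy)
    _ ≤ dist z y := by rw [add_zero, dist_eq_norm]; exact mul_le_of_le_one_left (norm_nonneg _) hw

end

theorem subdiff_infDist_of_not_mem_general {s : ℕ}
    (Ω : Set (EuclideanSpace ℝ (Fin s)))
    (hcv : Convex ℝ Ω)
    (xbar : EuclideanSpace ℝ (Fin s)) (hxbar : xbar ∉ Ω)
    (p : EuclideanSpace ℝ (Fin s))
    (hp : p ∈ Ω ∧ dist xbar p = Metric.infDist xbar Ω) :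
    ∀ v : EuclideanSpace ℝ (Fin s),
      (∀ x, (inner ℝ v (x - xbar) : ℝ) ≤ Metric.infDist x Ω - Metric.infDist xbar Ω) ↔
        v = (Metric.infDist xbar Ω)⁻¹ • (xbar - p) := by
  obtain ⟨hpΩ, hpd⟩ := hp
  set d := infDist xbar Ω
  have hnorm : ‖xbar - p‖ = d := by rw [← dist_eq_norm, hpd]
  have hd : 0 < d := hnorm ▸ norm_pos_iff.2 (sub_ne_zero.2 (ne_of_mem_of_not_mem hpΩ hxbar).symm)
  intro v
  constructor
  · intro hv
    have hv1 : ‖v‖ ≤ 1 := by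
      simpa using (lipschitz_infDist_pt Ω).norm_le_of_forall_inner_sub_le_sub hv
    have hvu : ‖xbar - p‖ ≤ ⟪v, xbar - p⟫ := by
      have := hv p
      rw [infDist_zero_of_mem hpΩ, ← neg_sub, inner_neg_right] at this
      linarith
    rw [← smul_eq_of_norm_le_one_of_norm_le_inner hv1 hvu, hnorm, smul_smul,
      inv_mul_cancel₀ hd.ne', one_smul]
  · rintro rfl x
    have hunit : ‖d⁻¹ • (xbar - p)‖ ≤ 1 := by
      rw [norm_smul, hnorm, norm_inv, Real.norm_of_nonneg hd.le, inv_mul_cancel₀ hd.ne']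
    have hnormal : ∀ y ∈ Ω, ⟪d⁻¹ • (xbar - p), y - p⟫ ≤ 0 := fun y hy => by
      rw [real_inner_smul_left]
      exact mul_nonpos_of_nonneg_of_nonpos (inv_nonneg.2 hd.le)
        (hcv.inner_sub_le_zero_of_dist_eq_infDist hpΩ hpd hy)
    have hcenter : ⟪d⁻¹ • (xbar - p), xbar - p⟫ = d := by
      rw [real_inner_smul_left, real_inner_self_eq_norm_sq, hnorm]
      field_simp
    calc ⟪d⁻¹ • (xbar - p), x - xbar⟫
        = ⟪d⁻¹ • (xbar - p), x - p⟫ - ⟪d⁻¹ • (xbar - p), xbar - p⟫ := by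
          rw [← inner_sub_right, sub_sub_sub_cancel_right]
      _ ≤ infDist x Ω - d := by
          rw [hcenter]
          gcongr
          exact inner_sub_le_infDist hunit hpΩ hnormal x

/-- Proposition 2.2, case `xbar ∉ Ω`: the subdifferential of the distance function
`d(·; Ω)` at `xbar` is the singleton `{(xbar - Π(xbar; Ω)) / d(xbar; Ω)}`. -/
theorem subdiff_infDist_of_not_mem {s : ℕ}
    (Ω : Set (EuclideanSpace ℝ (Fin s)))
    (hne : Ω.Nonempty) (hcl : IsClosed Ω) (hcv : Convex ℝ Ω)
    (xbar : EuclideanSpace ℝ (Fin s)) (hxbar : xbar ∉ Ω)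
    (p : EuclideanSpace ℝ (Fin s))
    (hp : p ∈ Ω ∧ dist xbar p = Metric.infDist xbar Ω) :
    ∀ v : EuclideanSpace ℝ (Fin s),
      (∀ x, (inner ℝ v (x - xbar) : ℝ) ≤ Metric.infDist x Ω - Metric.infDist xbar Ω) ↔
        v = (Metric.infDist xbar Ω)⁻¹ • (xbar - p) :=
  subdiff_infDist_of_not_mem_general Ω hcv xbar hxbar p hp
end

section
/- (Projected subgradient method for the generalized Heron problem) Let Ω, Ω₁, …, Ωₙ be nonempty closed convex subsets of ℝˢ with at least one of them bounded, and let D(x) = ∑_{i=1}^n d(x;Ωᵢ). Let (α_k)_{k≥1} be positive reals with ∑_{k=1}^∞ α_k = ∞ and ∑_{k=1}^∞ α_k² < ∞. Let x₁ ∈ Ω and define iteratively x_{k+1} = Π(x_k − α_k ∑_{i=1}^n v_{ik}; Ω), where v_{ik} = (x_k − Π(x_k;Ωᵢ))/d(x_k;Ωᵢ) if x_k ∉ Ωᵢ and v_{ik} = 0 if x_k ∈ Ωᵢ. Then the sequence (x_k) converges to an optimal solution x̄ of the generalized Heron problem (x̄ ∈ Ω and D(x̄) = inf_{x ∈ Ω}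 D(x)), and the value sequence V_k = min{D(x_j) : 1 ≤ j ≤ k} converges to the optimal value inf_{x ∈ Ω} D(x). -/
/-!
The objective `D = ∑ i, infDist · Ωᵢ` is convex, and `∑ i, v k i` is a subgradient of `D` at `x k`
of norm at most `n`. Since the projection onto `Ω` is nonexpansive towards points of `Ω`, every
`z ∈ Ω` satisfies `‖x (k+1) - z‖² ≤ ‖x k - z‖² - 2 α k (D (x k) - D z) + n² α k²`.
For a minimiser `z` (it exists because one of the sets is bounded, which makes `D` coercive on `Ω`)
summing these inequalities bounds the iterates and `∑ α k (D (x k) - D z)`; as `∑ α k = ∞`, some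
subsequence has `D (x k) → D z` and converges to a minimiser `xbar`. With `z = xbar` the sequence
`‖x k - xbar‖²` decreases up to summable errors, so it converges, and its limit is `0` along the
subsequence.
-/

open scoped Classical

open Filter Metric Topology Finset InnerProductSpace

section MetricSpace

variable {X : Type*} [MetricSpace X] {s : Set X}

theorem isClosed_of_forall_exists_dist_eq_infDist
    (h : ∀ y, ∃ p ∈ s, dist y p = infDist y s) : IsClosed s := by
  refine closure_subset_iff_isClosed.1 fun y hy => ?_
  obtain ⟨p, hp, hyp⟩ := h y
  rwa [dist_eq_zero.1 (hyp.trans (infDist_zero_of_mem_closure hy))]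

theorem dist_sub_le_infDist_of_subset_closedBall {c : X} {M : ℝ} (hs : s.Nonempty)
    (hsM : s ⊆ closedBall c M) (w : X) : dist w c - M ≤ infDist w s :=
  (le_infDist hs).2 fun q hq => by
    linarith [dist_triangle w q c, mem_closedBall.1 (hsM hq)]

theorem exists_isMinOn_sum_infDist [ProperSpace X] {ι : Type*} [Fintype ι] {Ω : Set X}
    (Ωs : ι → Set X) (hΩne : Ω.Nonempty) (hΩcl : IsClosed Ω) (hne : ∀ i, (Ωs i).Nonempty)
    (hbd : Bornology.IsBounded Ω ∨ ∃ i, Bornology.IsBounded (Ωs i)) :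
    ∃ z ∈ Ω, IsMinOn (fun y => ∑ i, infDist y (Ωs i)) Ω z := by
  set D := fun y => ∑ i, infDist y (Ωs i)
  have hD : Continuous D := by fun_prop
  rcases hbd with hb | ⟨i, hb⟩
  · exact (hb.isCompact_closure.of_isClosed_subset hΩcl subset_closure).exists_isMinOn hΩne
      hD.continuousOn
  obtain ⟨a, ha⟩ := hΩne
  obtain ⟨M, hM⟩ := hb.subset_closedBall a
  refine hD.continuousOn.exists_isMinOn' hΩcl ha (Eventually.filter_mono inf_le_left ?_)
  filter_upwards [(isCompact_closedBall a (M + D a)).compl_mem_cocompact] with w hw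
  have hwa : M + D a < dist w a := not_le.1 hw
  linarith [dist_sub_le_infDist_of_subset_closedBall (hne i) hM w,
    single_le_sum (fun j _ => infDist_nonneg (x := w) (s := Ωs j)) (mem_univ i)]

theorem tendsto_dist_of_tendsto_subseq {x : ℕ → X} {a : X} {L : ℝ} {φ : ℕ → ℕ}
    (hφ : StrictMono φ) (hL : Tendsto (fun k => dist (x k) a) atTop (𝓝 L))
    (hsub : Tendsto (x ∘ φ) atTop (𝓝 a)) : Tendsto x atTop (𝓝 a) := by
  have hL0 : L = 0 :=
    tendsto_nhds_unique (hL.comp hφ.tendsto_atTop) (tendsto_iff_dist_tendsto_zero.1 hsub)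
  exact tendsto_iff_dist_tendsto_zero.2 (hL0 ▸ hL)

end MetricSpace

section InnerProductSpace

variable {E : Type*} [NormedAddCommGroup E] [InnerProductSpace ℝ E] {K : Set E} {u p : E}

theorem Convex.inner_sub_le_zero_of_dist_eq_infDist_s16 (hK : Convex ℝ K) (hp : p ∈ K)
    (hd : dist u p = infDist u K) {w : E} (hw : w ∈ K) : ⟪u - p, w - p⟫_ℝ ≤ 0 := by
  refine (norm_eq_iInf_iff_real_inner_le_zero hK hp).1 ?_ w hw
  rw [infDist_eq_iInf] at hd
  simpa [dist_eq_norm] using hd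

theorem Convex.norm_sub_le_of_dist_eq_infDist (hK : Convex ℝ K) (hp : p ∈ K)
    (hd : dist u p = infDist u K) {z : E} (hz : z ∈ K) : ‖p - z‖ ≤ ‖u - z‖ := by
  have hvi := hK.inner_sub_le_zero_of_dist_eq_infDist_s16 hp hd hz
  have hexp : ‖u - z‖ ^ 2 = ‖u - p‖ ^ 2 - 2 * ⟪u - p, z - p⟫_ℝ + ‖p - z‖ ^ 2 := by
    rw [← sub_sub_sub_cancel_right u z p, norm_sub_sq_real, norm_sub_rev z p]
  refine (pow_le_pow_iff_left₀ (norm_nonneg _) (norm_nonneg _) two_ne_zero).1 ?_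
  nlinarith [sq_nonneg ‖u - p‖]

/-- When `p` is a nearest point of `K` to `x`, this is a subgradient of `infDist · K` at `x`. -/
noncomputable def infDistSubgrad (K : Set E) (x p : E) : E :=
  if x ∈ K then 0 else (infDist x K)⁻¹ • (x - p)

theorem norm_infDistSubgrad_le_one {x : E} (hd : dist x p = infDist x K) :
    ‖infDistSubgrad K x p‖ ≤ 1 := by
  unfold infDistSubgrad
  split_ifs
  · simp
  · rw [norm_smul, norm_inv, ← dist_eq_norm, hd, Real.norm_of_nonneg infDist_nonneg]
    exact inv_mul_le_one

theorem Convex.inner_infDistSubgrad_le (hK : Convex ℝ K) {x : E} (hp : p ∈ K)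
    (hd : dist x p = infDist x K) (y : E) :
    ⟪infDistSubgrad K x p, y - x⟫_ℝ ≤ infDist y K - infDist x K := by
  unfold infDistSubgrad
  split_ifs with hx
  · simp [infDist_zero_of_mem hx, infDist_nonneg]
  have hd0 : 0 < infDist x K := hd ▸ dist_pos.2 fun h => hx (h ▸ hp)
  have hw : ‖x - p‖ = infDist x K := by rw [← dist_eq_norm, hd]
  rw [real_inner_smul_left, le_sub_iff_add_le]
  refine (le_infDist ⟨p, hp⟩).2 fun q hq => ?_
  rw [← le_sub_iff_add_le, inv_mul_le_iff₀ hd0]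
  have hvi := hK.inner_sub_le_zero_of_dist_eq_infDist_s16 hp hd hq
  have hcs : ⟪x - p, y - q⟫_ℝ ≤ ‖x - p‖ * dist y q := dist_eq_norm y q ▸ real_inner_le_norm _ _
  have hsplit : ⟪x - p, y - x⟫_ℝ = ⟪x - p, y - q⟫_ℝ + ⟪x - p, q - p⟫_ℝ - ‖x - p‖ ^ 2 := by
    rw [← real_inner_self_eq_norm_sq, ← inner_add_right, ← inner_sub_right]
    congr 1; abel
  rw [hw] at hcs hsplit
  linarith

theorem norm_sub_sq_le_of_projected_subgradient_step {Ω : Set E} (hΩ : Convex ℝ Ω)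
    {f : E → ℝ} {x g z : E} {a L : ℝ} (ha : 0 ≤ a) (hg : ⟪g, z - x⟫_ℝ ≤ f z - f x)
    (hgL : ‖g‖ ≤ L) (hp : p ∈ Ω) (hpd : dist (x - a • g) p = infDist (x - a • g) Ω)
    (hz : z ∈ Ω) : ‖p - z‖ ^ 2 ≤ ‖x - z‖ ^ 2 - 2 * a * (f x - f z) + L ^ 2 * a ^ 2 := by
  have hproj : ‖p - z‖ ^ 2 ≤ ‖x - z - a • g‖ ^ 2 := by
    rw [sub_right_comm]
    exact pow_le_pow_left₀ (norm_nonneg _) (hΩ.norm_sub_le_of_dist_eq_infDist hp hpd hz) 2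
  have hexp : ‖x - z - a • g‖ ^ 2 = ‖x - z‖ ^ 2 + 2 * a * ⟪g, z - x⟫_ℝ + a ^ 2 * ‖g‖ ^ 2 := by
    rw [norm_sub_sq_real, real_inner_smul_right, norm_smul, Real.norm_of_nonneg ha,
      ← neg_sub z x, inner_neg_left, real_inner_comm]
    ring
  have hsub : a * ⟪g, z - x⟫_ℝ ≤ a * (f z - f x) := mul_le_mul_of_nonneg_left hg ha
  have hnorm : a ^ 2 * ‖g‖ ^ 2 ≤ a ^ 2 * L ^ 2 := by gcongr
  linarith

end InnerProductSpace

theorem exists_tendsto_of_le_add_of_summable {u c : ℕ → ℝ} (hu : ∀ k, 0 ≤ u k)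
    (hc : ∀ k, 0 ≤ c k) (hsum : Summable c) (hrec : ∀ k, u (k + 1) ≤ u k + c k) :
    ∃ L, Tendsto u atTop (𝓝 L) := by
  set r : ℕ → ℝ := fun k => ∑' j, c (j + k)
  have hr : ∀ k, r k = c k + r (k + 1) := fun k => by
    simpa [r, add_assoc, add_comm 1 k] using ((summable_nat_add_iff k).2 hsum).tsum_eq_zero_add
  have hanti : Antitone (u + r) := antitone_nat_of_succ_le fun k => by
    simp only [Pi.add_apply]; linarith [hrec k, hr k]
  have hbdd : BddBelow (Set.range (u + r)) :=
    ⟨0, Set.forall_mem_range.2 fun k => add_nonneg (hu k) (tsum_nonneg fun j => hc _)⟩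
  exact ⟨_, by simpa [r] using (tendsto_atTop_ciInf hanti hbdd).sub (tendsto_sum_nat_add c)⟩

theorem frequently_lt_of_sum_mul_le {α a : ℕ → ℝ} {C ε : ℝ} (hα : ∀ k, 0 ≤ α k)
    (hdiv : Tendsto (fun K => ∑ k ∈ range K, α k) atTop atTop)
    (hC : ∀ K, ∑ k ∈ range K, α k * a k ≤ C) (hε : 0 < ε) : ∃ᶠ k in atTop, a k < ε := by
  by_contra h
  obtain ⟨N, hN⟩ := eventually_atTop.1 (not_frequently.1 h)
  have hgrowth : ∀ K ≥ N, ε * ∑ k ∈ range K, α k + ∑ k ∈ range N, α k * (a k - ε)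
      ≤ ∑ k ∈ range K, α k * a k := fun K hK => by
    have hsplit := sum_range_add_sum_Ico (fun k => α k * (a k - ε)) hK
    have hIco : 0 ≤ ∑ k ∈ Ico N K, α k * (a k - ε) := sum_nonneg fun k hk =>
      mul_nonneg (hα k) (sub_nonneg.2 (not_lt.1 (hN k (mem_Ico.1 hk).1)))
    have hdistrib : ∑ k ∈ range K, α k * (a k - ε)
        = ∑ k ∈ range K, α k * a k - ε * ∑ k ∈ range K, α k := by
      rw [mul_sum, ← sum_sub_distrib]; congr 1; ext k; ring
    linarith
  have htop : Tendsto (fun K => ∑ k ∈ range K, α k * a k) atTop atTop :=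
    tendsto_atTop_mono' _ (eventually_atTop.2 ⟨N, hgrowth⟩)
      (tendsto_atTop_add_const_right _ _ (hdiv.const_mul_atTop hε))
  obtain ⟨K, hK⟩ := (htop.eventually_gt_atTop C).exists
  exact (hC K).not_gt hK

section Convergence

variable {E : Type*} [NormedAddCommGroup E] {f : E → ℝ} {Ω : Set E} {α : ℕ → ℝ}
  {x : ℕ → E} {c : ℝ}

theorem norm_sub_sq_add_sum_le {z : E}
    (hstep : ∀ k, ‖x (k + 1) - z‖ ^ 2 ≤ ‖x k - z‖ ^ 2 - 2 * α k * (f (x k) - f z) + c * α k ^ 2)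
    (K : ℕ) : ‖x K - z‖ ^ 2 + 2 * ∑ k ∈ range K, α k * (f (x k) - f z)
      ≤ ‖x 0 - z‖ ^ 2 + c * ∑ k ∈ range K, α k ^ 2 := by
  induction K with
  | zero => simp
  | succ K ih => rw [sum_range_succ, sum_range_succ]; linarith [hstep K]

variable [ProperSpace E] (hΩ : IsClosed Ω) (hf : Continuous f) (hα : ∀ k, 0 ≤ α k)
  (hdiv : Tendsto (fun K => ∑ k ∈ range K, α k) atTop atTop)
  (hsq : Summable fun k => α k ^ 2) (hc : 0 ≤ c) (hx : ∀ k, x k ∈ Ω)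
  (hstep : ∀ z ∈ Ω, ∀ k,
    ‖x (k + 1) - z‖ ^ 2 ≤ ‖x k - z‖ ^ 2 - 2 * α k * (f (x k) - f z) + c * α k ^ 2)
include hΩ hf hα hdiv hsq hc hx hstep

theorem exists_isMinOn_tendsto_subseq_of_norm_sub_sq_le (hmin : ∃ z ∈ Ω, IsMinOn f Ω z) :
    ∃ xbar ∈ Ω, IsMinOn f Ω xbar ∧ ∃ φ : ℕ → ℕ, StrictMono φ ∧ Tendsto (x ∘ φ) atTop (𝓝 xbar) := by
  obtain ⟨z, hz, hzmin⟩ := hmin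
  set C := ‖x 0 - z‖ ^ 2 + c * ∑' k, α k ^ 2
  have hgap : ∀ k, 0 ≤ α k * (f (x k) - f z) := fun k =>
    mul_nonneg (hα k) (sub_nonneg.2 (hzmin (hx k)))
  have hbound : ∀ K, ‖x K - z‖ ^ 2 + 2 * ∑ k ∈ range K, α k * (f (x k) - f z) ≤ C := fun K =>
    (norm_sub_sq_add_sum_le (hstep z hz) K).trans <| add_le_add le_rfl
      (mul_le_mul_of_nonneg_left (hsq.sum_le_tsum _ fun k _ => sq_nonneg _) hc)
  have hfreq : ∀ m : ℕ, ∃ᶠ k in atTop, f (x k) - f z < 1 / (m + 1) := fun m =>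
    frequently_lt_of_sum_mul_le (C := C / 2) hα hdiv
      (fun K => by linarith [hbound K, sq_nonneg ‖x K - z‖]) Nat.one_div_pos_of_nat
  obtain ⟨φ, hφ, hφlt⟩ := extraction_forall_of_frequently hfreq
  have hball : ∀ k, x k ∈ Ω ∩ closedBall z √C := fun k => by
    refine ⟨hx k, mem_closedBall.2 (dist_eq_norm (x k) z ▸ Real.le_sqrt_of_sq_le ?_)⟩
    linarith [hbound k, sum_nonneg fun j (_ : j ∈ range k) => hgap j]
  obtain ⟨xbar, ⟨hxbarΩ, -⟩, ψ, hψ, hlim⟩ :=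
    ((isCompact_closedBall z √C).inter_left hΩ).tendsto_subseq fun m => hball (φ m)
  have hfφ : Tendsto (fun m => f (x (φ m))) atTop (𝓝 (f z)) := by
    have hup : Tendsto (fun m : ℕ => f z + 1 / ((m : ℝ) + 1)) atTop (𝓝 (f z)) := by
      simpa using tendsto_const_nhds.add (tendsto_one_div_add_atTop_nhds_zero_nat (𝕜 := ℝ))
    exact tendsto_of_tendsto_of_tendsto_of_le_of_le tendsto_const_nhds hup
      (fun m => hzmin (hx (φ m))) fun m => by linarith [hφlt m]
  have hfxbar : f xbar = f z :=
    tendsto_nhds_unique ((hf.tendsto xbar).comp hlim) (hfφ.comp hψ.tendsto_atTop)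
  exact ⟨xbar, hxbarΩ, fun y hy => hfxbar ▸ hzmin hy, φ ∘ ψ, hφ.comp hψ, hlim⟩

theorem exists_isMinOn_tendsto_of_norm_sub_sq_le (hmin : ∃ z ∈ Ω, IsMinOn f Ω z) :
    ∃ xbar ∈ Ω, IsMinOn f Ω xbar ∧ Tendsto x atTop (𝓝 xbar) := by
  obtain ⟨xbar, hxbarΩ, hxbarmin, φ, hφ, hlim⟩ :=
    exists_isMinOn_tendsto_subseq_of_norm_sub_sq_le hΩ hf hα hdiv hsq hc hx hstep hmin
  have hfejer : ∀ k, ‖x (k + 1) - xbar‖ ^ 2 ≤ ‖x k - xbar‖ ^ 2 + c * α k ^ 2 := fun k => by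
    linarith [hstep xbar hxbarΩ k, mul_nonneg (hα k) (sub_nonneg.2 (hxbarmin (hx k)))]
  obtain ⟨L, hL⟩ := exists_tendsto_of_le_add_of_summable (u := fun k => ‖x k - xbar‖ ^ 2)
    (fun k => sq_nonneg _) (fun k => mul_nonneg hc (sq_nonneg _)) (hsq.mul_left c) hfejer
  refine ⟨xbar, hxbarΩ, hxbarmin, tendsto_dist_of_tendsto_subseq (L := √L) hφ ?_ hlim⟩
  simpa [dist_eq_norm, Real.sqrt_sq (norm_nonneg _)] using hL.sqrt

end Convergence

theorem tendsto_inf'_range_of_tendsto {β : Type*} [LinearOrder β] [TopologicalSpace β]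
    [OrderTopology β] {u : ℕ → β} {l : β} (hu : Tendsto u atTop (𝓝 l)) (hl : ∀ k, l ≤ u k) :
    Tendsto (fun k => (range (k + 1)).inf' nonempty_range_add_one u) atTop (𝓝 l) :=
  tendsto_of_tendsto_of_tendsto_of_le_of_le tendsto_const_nhds hu
    (fun _ => le_inf' _ _ fun j _ => hl j) fun k => inf'_le _ (self_mem_range_succ k)

theorem heron_projected_subgradient_method_general {s n : ℕ}
    (Ω : Set (EuclideanSpace ℝ (Fin s))) (Ωs : Fin n → Set (EuclideanSpace ℝ (Fin s)))
    (hΩcv : Convex ℝ Ω)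
    (hcv : ∀ i, Convex ℝ (Ωs i))
    (hbd : Bornology.IsBounded Ω ∨ ∃ i, Bornology.IsBounded (Ωs i))
    (projΩ : EuclideanSpace ℝ (Fin s) → EuclideanSpace ℝ (Fin s))
    (hprojΩ : ∀ y, projΩ y ∈ Ω ∧ dist y (projΩ y) = Metric.infDist y Ω)
    (proj : Fin n → EuclideanSpace ℝ (Fin s) → EuclideanSpace ℝ (Fin s))
    (hproj : ∀ i y, proj i y ∈ Ωs i ∧ dist y (proj i y) = Metric.infDist y (Ωs i))
    (α : ℕ → ℝ) (hαpos : ∀ k, 0 < α k)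
    (hαdiv : Filter.Tendsto (fun K => ∑ k ∈ Finset.range K, α k) Filter.atTop Filter.atTop)
    (hαsq : Summable fun k => (α k) ^ 2)
    (x : ℕ → EuclideanSpace ℝ (Fin s)) (hx0 : x 0 ∈ Ω)
    (v : ℕ → Fin n → EuclideanSpace ℝ (Fin s))
    (hv : ∀ k i, v k i =
      if x k ∈ Ωs i then 0
      else (Metric.infDist (x k) (Ωs i))⁻¹ • (x k - proj i (x k)))
    (hrec : ∀ k, x (k + 1) = projΩ (x k - α k • ∑ i, v k i))
    (V : ℕ → ℝ)
    (hV : ∀ k, V k = (Finset.range (k + 1)).inf' Finset.nonempty_range_add_one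
      (fun j => ∑ i, Metric.infDist (x j) (Ωs i))) :
    ∃ xbar ∈ Ω,
      (∀ y ∈ Ω, ∑ i, Metric.infDist xbar (Ωs i) ≤ ∑ i, Metric.infDist y (Ωs i)) ∧
      Filter.Tendsto x Filter.atTop (nhds xbar) ∧
      Filter.Tendsto V Filter.atTop (nhds (∑ i, Metric.infDist xbar (Ωs i))) := by
  set D := fun y => ∑ i, infDist y (Ωs i)
  have hΩcl : IsClosed Ω := isClosed_of_forall_exists_dist_eq_infDist fun y => ⟨_, hprojΩ y⟩
  have hxΩ : ∀ k, x k ∈ Ω := Nat.rec hx0 fun k _ => hrec k ▸ (hprojΩ _).1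
  have hvsub : ∀ k i, v k i = infDistSubgrad (Ωs i) (x k) (proj i (x k)) := hv
  have hsubgrad : ∀ k y, ⟪∑ i, v k i, y - x k⟫_ℝ ≤ D y - D (x k) := fun k y => by
    rw [sum_inner, ← sum_sub_distrib]
    exact sum_le_sum fun i _ => hvsub k i ▸
      (hcv i).inner_infDistSubgrad_le (hproj i (x k)).1 (hproj i (x k)).2 y
  have hnorm : ∀ k, ‖∑ i, v k i‖ ≤ n := fun k => by
    refine (norm_sum_le _ _).trans ?_
    simpa [hvsub] using sum_le_sum fun i (_ : i ∈ univ) =>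
      norm_infDistSubgrad_le_one (hproj i (x k)).2
  have hD : Continuous D := by fun_prop
  obtain ⟨xbar, hxbarΩ, hxbarmin, hlim⟩ := exists_isMinOn_tendsto_of_norm_sub_sq_le hΩcl hD
    (fun k => (hαpos k).le) hαdiv hαsq (sq_nonneg (n : ℝ)) hxΩ
    (fun z hz k => hrec k ▸ norm_sub_sq_le_of_projected_subgradient_step hΩcv (hαpos k).le
      (hsubgrad k z) (hnorm k) (hprojΩ _).1 (hprojΩ _).2 hz)
    (exists_isMinOn_sum_infDist Ωs ⟨x 0, hx0⟩ hΩcl (fun i => ⟨_, (hproj i 0).1⟩) hbd)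
  refine ⟨xbar, hxbarΩ, fun y hy => hxbarmin hy, hlim, ?_⟩
  rw [funext hV]
  exact tendsto_inf'_range_of_tendsto ((hD.tendsto xbar).comp hlim) fun k => hxbarmin (hxΩ k)

/-- Theorem 4.1: the projected subgradient method for the generalized Heron problem.
If one of the nonempty closed convex sets `Ω, Ω₁, …, Ωₙ` is bounded and the step
sizes `αₖ > 0` satisfy `∑ αₖ = ∞`, `∑ αₖ² < ∞`, then the iterates
`x_{k+1} = Π(x_k - αₖ ∑ i, v_{ik}; Ω)` converge to an optimal solution `xbar` of the
problem, and the record values `V_k = min_{j ≤ k} D(x_j)` converge to the optimal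
value `D(xbar)`. -/
theorem heron_projected_subgradient_method {s n : ℕ}
    (Ω : Set (EuclideanSpace ℝ (Fin s))) (Ωs : Fin n → Set (EuclideanSpace ℝ (Fin s)))
    (hΩne : Ω.Nonempty) (hΩcl : IsClosed Ω) (hΩcv : Convex ℝ Ω)
    (hne : ∀ i, (Ωs i).Nonempty) (hcl : ∀ i, IsClosed (Ωs i)) (hcv : ∀ i, Convex ℝ (Ωs i))
    (hbd : Bornology.IsBounded Ω ∨ ∃ i, Bornology.IsBounded (Ωs i))
    (projΩ : EuclideanSpace ℝ (Fin s) → EuclideanSpace ℝ (Fin s))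
    (hprojΩ : ∀ y, projΩ y ∈ Ω ∧ dist y (projΩ y) = Metric.infDist y Ω)
    (proj : Fin n → EuclideanSpace ℝ (Fin s) → EuclideanSpace ℝ (Fin s))
    (hproj : ∀ i y, proj i y ∈ Ωs i ∧ dist y (proj i y) = Metric.infDist y (Ωs i))
    (α : ℕ → ℝ) (hαpos : ∀ k, 0 < α k)
    (hαdiv : Filter.Tendsto (fun K => ∑ k ∈ Finset.range K, α k) Filter.atTop Filter.atTop)
    (hαsq : Summable fun k => (α k) ^ 2)
    (x : ℕ → EuclideanSpace ℝ (Fin s)) (hx0 : x 0 ∈ Ω)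
    (v : ℕ → Fin n → EuclideanSpace ℝ (Fin s))
    (hv : ∀ k i, v k i =
      if x k ∈ Ωs i then 0
      else (Metric.infDist (x k) (Ωs i))⁻¹ • (x k - proj i (x k)))
    (hrec : ∀ k, x (k + 1) = projΩ (x k - α k • ∑ i, v k i))
    (V : ℕ → ℝ)
    (hV : ∀ k, V k = (Finset.range (k + 1)).inf' Finset.nonempty_range_add_one
      (fun j => ∑ i, Metric.infDist (x j) (Ωs i))) :
    ∃ xbar ∈ Ω,
      (∀ y ∈ Ω, ∑ i, Metric.infDist xbar (Ωs i) ≤ ∑ i, Metric.infDist y (Ωs i)) ∧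
      Filter.Tendsto x Filter.atTop (nhds xbar) ∧
      Filter.Tendsto V Filter.atTop (nhds (∑ i, Metric.infDist xbar (Ωs i))) :=
  heron_projected_subgradient_method_general Ω Ωs hΩcv hcv hbd projΩ hprojΩ proj hproj α hαpos hαdiv
    hαsq x hx0 v hv hrec V hV
end
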